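/- arXiv:2503.17022 — 11 statements merged into one kernel-verified Lean document; each statement's English description precedes it below -/
import Mathlib

section
/- Let G = (V,E) be a finite simple graph that is (ℓ, ε)-sparse for some real ε < 1/2 and natural number ℓ. Then for every vertex subset U ⊆ V with |U| ≤ ℓ, the induced subgraph G[U] is 3-colourable, i.e. there exists a proper colouring of G[U] with 3 colours. -/
/-!
Since `ε < 1/2`, every nonempty `W ⊆ U` spans fewer than `3|W|/2` edges, so by the handshake lemma
some vertex of `W` has at most two neighbours in `W`. Hence `G[U]` is `2`-degenerate, and colouring
greedily (colour `G[W \ {v}]` first, then give `v` a colour missing among its at most two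
neighbours) uses at most three colours.
-/

/-- The set of edges of `G` with both endpoints in `U`. -/
def EdgesWithin {V : Type*} (G : SimpleGraph V) (U : Set V) : Set (Sym2 V) :=
  {e ∈ G.edgeSet | ∀ v ∈ e, v ∈ U}

/-- A graph is `(ℓ, ε)`-sparse if every vertex set `U` of size at most `ℓ`
spans at most `(1+ε)|U|` edges. -/
def Sparse {V : Type*} (G : SimpleGraph V) (ℓ : ℕ) (ε : ℝ) : Prop :=
  ∀ U : Set V, U.ncard ≤ ℓ → ((EdgesWithin G U).ncard : ℝ) ≤ (1 + ε) * U.ncard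

open Finset SimpleGraph

namespace SimpleGraph

variable {V : Type*} (G : SimpleGraph V)

def IsProperOn {α : Type*} (s : Set V) (χ : V → α) : Prop :=
  ∀ u ∈ s, ∀ v ∈ s, G.Adj u v → χ u ≠ χ v

def IsDegenerateOn [DecidableRel G.Adj] (k : ℕ) (W : Finset V) : Prop :=
  ∀ S ⊆ W, S.Nonempty → ∃ v ∈ S, #{w ∈ S | G.Adj v w} ≤ k

variable {G}

theorem IsProperOn.update_insert {α : Type*} [DecidableEq V] {s : Set V} {χ : V → α}
    (hχ : G.IsProperOn s χ) {v : V} (hv : v ∉ s) {c : α} (hc : ∀ w ∈ s, G.Adj v w → χ w ≠ c) :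
    G.IsProperOn (insert v s) (Function.update χ v c) := by
  have hne : ∀ w ∈ s, w ≠ v := fun w hw h => hv (h ▸ hw)
  rintro u (rfl | hu) w (rfl | hw) huw
  · exact (huw.ne rfl).elim
  · rw [Function.update_self, Function.update_of_ne (hne w hw)]
    exact (hc w hw huw).symm
  · rw [Function.update_self, Function.update_of_ne (hne u hu)]
    exact hc u hu huw.symm
  · rw [Function.update_of_ne (hne u hu), Function.update_of_ne (hne w hw)]
    exact hχ u hu w hw huw

theorem sum_card_adj_eq_two_mul_ncard_edgesWithin [Fintype V] [DecidableRel G.Adj]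
    (W : Finset V) : ∑ v ∈ W, #{w ∈ W | G.Adj v w} = 2 * (EdgesWithin G W).ncard := by
  classical
  set H := fromEdgeSet (EdgesWithin G W)
  have hadj : ∀ v w, H.Adj v w ↔ v ∈ W ∧ w ∈ W ∧ G.Adj v w := by
    intro v w
    simp only [H, fromEdgeSet_adj, EdgesWithin, Set.mem_ofPred_eq, mem_edgeSet, Sym2.mem_iff,
      mem_coe]
    refine ⟨fun ⟨⟨h, hW⟩, _⟩ => ⟨hW v (Or.inl rfl), hW w (Or.inr rfl), h⟩, ?_⟩
    rintro ⟨hv, hw, h⟩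
    exact ⟨⟨h, by rintro u (rfl | rfl) <;> assumption⟩, h.ne⟩
  have hdeg : ∀ v ∈ W, H.degree v = #{w ∈ W | G.Adj v w} := by
    intro v hv
    rw [← card_neighborFinset_eq_degree]
    congr 1
    ext w
    simp [hadj, hv]
  have hdeg_out : ∀ v ∉ W, H.degree v = 0 := by
    intro v hv
    rw [← card_neighborFinset_eq_degree, card_eq_zero]
    ext w
    simp [hadj, hv]
  have hedges : H.edgeSet = EdgesWithin G W := by
    rw [edgeSet_fromEdgeSet, sdiff_eq_left, Set.disjoint_left]
    rintro e ⟨he, -⟩ hdiag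
    exact G.not_isDiag_of_mem_edgeSet he (Sym2.mem_diagSet.mp hdiag)
  calc ∑ v ∈ W, #{w ∈ W | G.Adj v w} = ∑ v, H.degree v := by
        rw [← sum_subset (subset_univ W) fun v _ hv => hdeg_out v hv]
        exact sum_congr rfl fun v hv => (hdeg v hv).symm
    _ = 2 * (EdgesWithin G W).ncard := by
        rw [sum_degrees_eq_twice_card_edges, ← Set.ncard_coe_finset, coe_edgeFinset, hedges]

theorem exists_card_adj_le_of_two_mul_ncard_edgesWithin_lt [Fintype V] [DecidableRel G.Adj]
    {k : ℕ} {W : Finset V} (hW : 2 * (EdgesWithin G W).ncard < (k + 1) * #W) :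
    ∃ v ∈ W, #{w ∈ W | G.Adj v w} ≤ k := by
  rw [← sum_card_adj_eq_two_mul_ncard_edgesWithin, mul_comm, ← smul_eq_mul, ← sum_const] at hW
  obtain ⟨v, hv, hlt⟩ := exists_lt_of_sum_lt hW
  exact ⟨v, hv, Nat.le_of_lt_succ hlt⟩

theorem IsDegenerateOn.exists_isProperOn [DecidableEq V] [DecidableRel G.Adj] {k : ℕ}
    {W : Finset V} (hW : G.IsDegenerateOn k W) :
    ∃ χ : V → Fin (k + 1), G.IsProperOn W χ := by
  induction W using Finset.strongInduction with
  | H W ih =>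
  rcases W.eq_empty_or_nonempty with rfl | hne
  · exact ⟨fun _ => 0, by simp [IsProperOn]⟩
  obtain ⟨v, hv, hdeg⟩ := hW W subset_rfl hne
  obtain ⟨χ, hχ⟩ := ih (W.erase v) (erase_ssubset hv)
    fun S hS => hW S (hS.trans (erase_subset v W))
  have hcard : #(image χ {w ∈ W.erase v | G.Adj v w}) < #(univ : Finset (Fin (k + 1))) := by
    calc #(image χ {w ∈ W.erase v | G.Adj v w}) ≤ #{w ∈ W | G.Adj v w} :=
          card_image_le.trans <| card_le_card <| filter_subset_filter _ (erase_subset v W)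
      _ < k + 1 := Nat.lt_succ_of_le hdeg
      _ = #(univ : Finset (Fin (k + 1))) := by simp
  obtain ⟨c, -, hc⟩ := exists_mem_notMem_of_card_lt_card hcard
  refine ⟨Function.update χ v c, ?_⟩
  have hextend := hχ.update_insert (c := c) (notMem_erase v W) fun w hw hvw hwc =>
    hc (hwc ▸ mem_image_of_mem χ (mem_filter.mpr ⟨hw, hvw⟩))
  rwa [← coe_insert, insert_erase hv] at hextend

end SimpleGraph

theorem Sparse.two_mul_ncard_edgesWithin_lt {V : Type*} {G : SimpleGraph V} {ℓ : ℕ} {ε : ℝ}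
    (hsp : Sparse G ℓ ε) (hε : ε < 1 / 2) {S : Finset V} (hS : #S ≤ ℓ) (hne : S.Nonempty) :
    2 * (EdgesWithin G S).ncard < 3 * #S := by
  have hbound := hsp S (by rwa [Set.ncard_coe_finset])
  rw [Set.ncard_coe_finset] at hbound
  have hpos : (0 : ℝ) < #S := by exact_mod_cast hne.card_pos
  exact_mod_cast (show (2 * (EdgesWithin G S).ncard : ℝ) < 3 * #S by nlinarith)

/-- in an `(ℓ, ε)`-sparse graph with `ε < 1/2`, every vertex set of
size at most `ℓ` induces a `3`-colourable subgraph. -/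
theorem stmt_0 {V : Type*} [Fintype V] (G : SimpleGraph V) (ℓ : ℕ) (ε : ℝ)
    (hε : ε < 1 / 2) (hsp : Sparse G ℓ ε) (U : Set V) (hU : U.ncard ≤ ℓ) :
    ∃ χ : V → Fin 3, ∀ u ∈ U, ∀ v ∈ U, G.Adj u v → χ u ≠ χ v := by
  classical
  have hdegenerate : G.IsDegenerateOn 2 U.toFinset := by
    intro S hS hne
    have hcard : #S ≤ ℓ := by
      calc #S ≤ #U.toFinset := card_le_card hS
        _ = U.ncard := (Set.ncard_eq_toFinset_card' U).symm
        _ ≤ ℓ := hU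
    exact exists_card_adj_le_of_two_mul_ncard_edgesWithin_lt
      (hsp.two_mul_ncard_edgesWithin_lt hε hcard hne)
  obtain ⟨χ, hχ⟩ := hdegenerate.exists_isProperOn
  rw [Set.coe_toFinset] at hχ
  exact ⟨χ, hχ⟩
end

section
/- Let F be a field, let g be a polynomial in F[x₁,…,xₙ], and let Q be a set of polynomials in F[x₁,…,xₙ] that contains all the Boolean axioms xᵢ² − xᵢ for i = 1,…,n. Then g vanishes on every common root of Q (in Fⁿ) if and only if g belongs to the ideal generated by Q. -/
open MvPolynomial

namespace Stmt1Aux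

variable {F : Type*} [Field F] {n : ℕ}

/-- indicator polynomial for a Boolean point -/
noncomputable def δ (b : Fin n → Bool) : MvPolynomial (Fin n) F :=
  ∏ i, if b i then X i else 1 - X i

/-- the Boolean point as a field point -/
def pt (b : Fin n → Bool) : Fin n → F := fun i => if b i then 1 else 0

lemma sum_delta : (∑ b : Fin n → Bool, δ b) = (1 : MvPolynomial (Fin n) F) := by
  classical
  have h := Finset.prod_univ_sum (κ := fun _ : Fin n => Bool)
      (t := fun _ => Finset.univ)
      (f := fun i (c : Bool) => if c then (X i : MvPolynomial (Fin n) F) else 1 - X i)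
  rw [show (∑ b : Fin n → Bool, (δ b : MvPolynomial (Fin n) F))
      = ∑ b ∈ Fintype.piFinset (fun _ : Fin n => (Finset.univ : Finset Bool)),
          ∏ i, (if b i then (X i : MvPolynomial (Fin n) F) else 1 - X i) from ?_, ← h]
  · simp
  · rw [Fintype.piFinset_univ]
    rfl

lemma mul_delta_mem (Q : Set (MvPolynomial (Fin n) F))
    (hQ : ∀ i : Fin n, (X i ^ 2 - X i) ∈ Q) (b : Fin n → Bool)
    (p : MvPolynomial (Fin n) F) :
    p * δ b - C (eval (pt b) p) * δ b ∈ Ideal.span Q := by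
  classical
  induction p using MvPolynomial.induction_on with
  | C a => simp
  | add p q hp hq =>
      have : (p + q) * δ b - C (eval (pt b) (p + q)) * δ b
          = (p * δ b - C (eval (pt b) p) * δ b) + (q * δ b - C (eval (pt b) q) * δ b) := by
        simp [map_add]; ring
      rw [this]; exact Ideal.add_mem _ hp hq
  | mul_X p i hp =>
      have hX : X i * δ b - C ((pt b i : F)) * δ b ∈ Ideal.span Q := by
        have hfac : (δ b : MvPolynomial (Fin n) F)
            = (if b i then X i else 1 - X i) * ∏ j ∈ Finset.univ.erase i,
                (if b j then X j else 1 - X j) := by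
          rw [δ, ← Finset.mul_prod_erase Finset.univ _ (Finset.mem_univ i)]
        have haxiom : (X i ^ 2 - X i : MvPolynomial (Fin n) F) ∈ Ideal.span Q :=
          Ideal.subset_span (hQ i)
        cases hbi : b i with
        | true =>
            have : X i * δ b - C ((pt b i : F)) * δ b
                = (X i ^ 2 - X i) * ∏ j ∈ Finset.univ.erase i,
                    (if b j then X j else 1 - X j) := by
              rw [hfac]; simp [pt, hbi]; ring
            rw [this]; exact Ideal.mul_mem_right _ _ haxiom
        | false =>
            have : X i * δ b - C ((pt b i : F)) * δ b
                = -((X i ^ 2 - X i) * ∏ j ∈ Finset.univ.erase i,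
                    (if b j then X j else 1 - X j)) := by
              rw [hfac]; simp [pt, hbi]; ring
            rw [this]; exact neg_mem (Ideal.mul_mem_right _ _ haxiom)
      have key : p * X i * δ b - C (eval (pt b) (p * X i)) * δ b
          = X i * (p * δ b - C (eval (pt b) p) * δ b)
            + C (eval (pt b) p) * (X i * δ b - C ((pt b i : F)) * δ b) := by
        simp [map_mul, eval_X]; ring
      rw [key]
      exact Ideal.add_mem _ (Ideal.mul_mem_left _ _ hp) (Ideal.mul_mem_left _ _ hX)

end Stmt1Aux

/-- over a field, if a set `Q` of polynomials contains all Boolean axioms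
`xᵢ² - xᵢ`, then a polynomial `g` vanishes on every common root of `Q` if and only if
`g` lies in the ideal generated by `Q`. -/
theorem stmt_1 {F : Type*} [Field F] {n : ℕ} (g : MvPolynomial (Fin n) F)
    (Q : Set (MvPolynomial (Fin n) F))
    (hQ : ∀ i : Fin n, (MvPolynomial.X i ^ 2 - MvPolynomial.X i) ∈ Q) :
    (∀ ξ : Fin n → F, (∀ q ∈ Q, MvPolynomial.eval ξ q = 0) → MvPolynomial.eval ξ g = 0)
      ↔ g ∈ Ideal.span Q := by
  classical
  constructor
  · intro hvan
    open Stmt1Aux in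
    have hg : g = ∑ b : Fin n → Bool, g * δ b := by
      rw [← Finset.mul_sum, sum_delta, mul_one]
    rw [hg]
    refine Ideal.sum_mem _ fun b _ => ?_
    have hsub := mul_delta_mem Q hQ b g
    by_cases hroot : ∀ q ∈ Q, eval (pt b) q = 0
    · have h0 : eval (pt b) g = 0 := hvan _ hroot
      have : g * δ b = g * δ b - C (eval (pt b) g) * δ b := by rw [h0]; simp
      rw [this]; exact hsub
    · push_neg at hroot
      obtain ⟨q, hqQ, hqne⟩ := hroot
      have hδ : (δ b : MvPolynomial (Fin n) F) ∈ Ideal.span Q := by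
        have hq1 : q * δ b ∈ Ideal.span Q :=
          Ideal.mul_mem_right _ _ (Ideal.subset_span hqQ)
        have hq2 := mul_delta_mem Q hQ b q
        have hCq : C (eval (pt b) q) * δ b ∈ Ideal.span Q := by
          have := Ideal.sub_mem _ hq1 hq2
          simpa using this
        have : C (eval (pt b) q)⁻¹ * (C (eval (pt b) q) * δ b) ∈ Ideal.span Q :=
          Ideal.mul_mem_left _ _ hCq
        rwa [← mul_assoc, ← map_mul, inv_mul_cancel₀ hqne, map_one, one_mul] at this
      have : g * δ b = (g - C (eval (pt b) g)) * δ b + C (eval (pt b) g) * δ b := by ring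
      rw [this]
      refine Ideal.add_mem _ ?_ (Ideal.mul_mem_left _ _ hδ)
      have : (g - C (eval (pt b) g)) * δ b = g * δ b - C (eval (pt b) g) * δ b := by ring
      rw [this]; exact hsub
  · intro hg ξ hroot
    have : Ideal.span Q ≤ RingHom.ker (MvPolynomial.eval ξ) := by
      rw [Ideal.span_le]
      intro q hq
      exact hroot q hq
    exact this hg
end

section
/- Let G = (V,E) be a finite simple graph, let ℓ be a positive integer and ε > 0 a real, and suppose G is (ℓ, 1/2 − ε)-sparse. Then every resolution refutation of the CNF formula Col(G,4) contains a clause of width at least ℓ/4. -/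
/-- A clause over variables `α`: a finite set of literals, where a literal is a
variable together with a polarity (`true` = positive, `false` = negated). -/
abbrev Clause (α : Type*) := Finset (α × Bool)

/-- `C` is obtained from `C₁` and `C₂` by the resolution rule: `C₁ = B ∨ x`,
`C₂ = C' ∨ ¬x` and `C = B ∨ C'`. -/
def IsResolvent {α : Type*} [DecidableEq α] (C₁ C₂ C : Clause α) : Prop :=
  ∃ x : α, (x, true) ∈ C₁ ∧ (x, false) ∈ C₂ ∧
    C = (C₁.erase (x, true)) ∪ (C₂.erase (x, false))

/-- A resolution refutation of the CNF formula (clause set) `Fm`: a sequence of clauses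
ending with the empty clause in which every clause is an axiom of `Fm` or the resolvent
of two earlier clauses. -/
def IsResolutionRefutation {α : Type*} [DecidableEq α]
    (Fm : Set (Clause α)) (D : List (Clause α)) : Prop :=
  D.getLast? = some ∅ ∧
  ∀ i (hi : i < D.length), D[i] ∈ Fm ∨
    ∃ j j', ∃ (hj : j < i) (hj' : j' < i),
      IsResolvent (D[j]'(hj.trans hi)) (D[j']'(hj'.trans hi)) D[i]

/-- The CNF formula `Col(G,k)` expressing that `G` is `k`-colourable. -/
def ColCNF {V : Type*} [Fintype V] (G : SimpleGraph V) (k : ℕ) [DecidableEq V] :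
    Set (Clause (V × Fin k)) :=
  {C | (∃ v : V, C = Finset.univ.image fun i : Fin k => ((v, i), true)) ∨
       (∃ (v : V) (i i' : Fin k), i ≠ i' ∧ C = {((v, i), false), ((v, i'), false)}) ∨
       (∃ (u v : V) (i : Fin k), G.Adj u v ∧ C = {((u, i), false), ((v, i), false)})}

/-!
For a clause `C` let `N(C)` be the set of vertices occurring negatively in `C`, and say that
`S` entails `C` if every colouring proper on `S ∪ N(C)` satisfies `C`. Axioms are entailed by
`∅`, and the resolvent of clauses entailed by `S₁` and `S₂` is entailed by `S₁ ∪ S₂` plus the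
vertex of the pivot. Shrinking that set to an inclusion-minimal entailing set `R` keeps its size
at most `t`: for `v ∈ R`, a colouring witnessing minimality may be recoloured at `v` with any
colour missing from the neighbourhood of `v`, and every such recolouring must satisfy `C` through
the positive literal `x_{v,i}`. So `C` contains `4 - deg(v)` positive literals on each `v ∈ R`,
which sparsity (average degree at most 3 on sets of at most `ℓ` vertices) turns into
`2|R| ≤ 3|C|`. If all clauses had width `< ℓ/4`, the empty clause would be entailed by a set of at
most `ℓ` vertices, but such sets are 3-degenerate, hence 4-colourable.
-/

open Finset

namespace SimpleGraph

variable {V : Type*} (G : SimpleGraph V) [DecidableRel G.Adj]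

theorem card_interedges_eq_sum [DecidableEq V] (s t : Finset V) :
    #(G.interedges s t) = ∑ v ∈ s, #{u ∈ t | G.Adj v u} := by
  rw [interedges, Rel.interedges_eq_biUnion, card_biUnion]
  · simp only [card_map]
  · intro a _ b _ hab
    rw [Function.onFun, Finset.disjoint_left]
    intro p hpa hpb
    obtain ⟨x, -, rfl⟩ := mem_map.1 hpa
    obtain ⟨y, -, h⟩ := mem_map.1 hpb
    exact hab (congrArg Prod.fst h).symm

theorem card_interedges_self [Fintype V] (X : Finset V) :
    #(G.interedges X X) = 2 * (EdgesWithin G X).ncard := by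
  classical
  let H := ((⊤ : G.Subgraph).induce (X : Set V)).spanningCoe
  have hE : EdgesWithin G X = H.edgeSet := by
    ext e; induction e; simp [EdgesWithin, H, and_comm, and_assoc]
  rw [hE, ← coe_edgeFinset, Set.ncard_coe_finset, two_mul_card_edgeFinset]
  congr 1
  ext ⟨a, b⟩
  simp [mem_interedges_iff, H]

theorem two_mul_card_interedges_le [DecidableEq V] {s t : Finset V} (hst : s ⊆ t) :
    2 * #(G.interedges s t) ≤ #(G.interedges s s) + #(G.interedges t t) := by
  have hsplit : #(G.interedges s t) ≤ #(G.interedges s s) + #(G.interedges s (t \ s)) := by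
    refine (card_le_card fun p hp => ?_).trans (card_union_le _ _)
    simp only [mem_union, mem_interedges_iff, mem_sdiff] at hp ⊢
    tauto
  have hcover : #(G.interedges s t) + #(G.interedges (t \ s) s) ≤ #(G.interedges t t) := by
    calc _ ≤ #(G.interedges s t) + #(G.interedges (t \ s) t) :=
          Nat.add_le_add_left (card_le_card (G.interedges_mono subset_rfl hst)) _
      _ = #(G.interedges s t ∪ G.interedges (t \ s) t) :=
          (card_union_of_disjoint (G.interedges_disjoint_left disjoint_sdiff t)).symm
      _ ≤ _ := card_le_card (union_subset (G.interedges_mono hst subset_rfl)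
          (G.interedges_mono sdiff_subset subset_rfl))
  have hcomm : #(G.interedges (t \ s) s) = #(G.interedges s (t \ s)) :=
    have := G.symm
    Rel.card_interedges_comm _ _
  omega

def LocalAvgDegreeLE (ℓ d : ℕ) : Prop :=
  ∀ X : Finset V, #X ≤ ℓ → #(G.interedges X X) ≤ d * #X

end SimpleGraph

namespace SimpleGraph

variable {V : Type*} (G : SimpleGraph V)

def ProperOn {α : Type*} (c : V → α) (S : Finset V) : Prop :=
  ∀ u ∈ S, ∀ w ∈ S, G.Adj u w → c u ≠ c w

variable {G}

theorem ProperOn.mono {α : Type*} {c : V → α} {S T : Finset V} (h : G.ProperOn c T)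
    (hST : S ⊆ T) : G.ProperOn c S :=
  fun u hu w hw => h u (hST hu) w (hST hw)

theorem ProperOn.update [DecidableEq V] [DecidableRel G.Adj] {α : Type*} [DecidableEq α]
    {c : V → α} {S : Finset V} {v : V} {i : α} (hc : G.ProperOn c (S.erase v))
    (hi : i ∉ {u ∈ S | G.Adj v u}.image c) : G.ProperOn (Function.update c v i) S := by
  intro u hu w hw huw
  rcases eq_or_ne u v with rfl | hu'
  · rw [Function.update_self, Function.update_of_ne (G.ne_of_adj huw).symm]
    exact fun h => hi (mem_image.2 ⟨w, mem_filter.2 ⟨hw, huw⟩, h.symm⟩)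
  rcases eq_or_ne w v with rfl | hw'
  · rw [Function.update_self, Function.update_of_ne hu']
    exact fun h => hi (mem_image.2 ⟨u, mem_filter.2 ⟨hu, huw.symm⟩, h⟩)
  rw [Function.update_of_ne hu', Function.update_of_ne hw']
  exact hc u (mem_erase.2 ⟨hu', hu⟩) w (mem_erase.2 ⟨hw', hw⟩) huw

theorem exists_properOn_of_forall_exists_card_adj_le [DecidableEq V] [DecidableRel G.Adj]
    {k : ℕ} (S : Finset V) (h : ∀ T ⊆ S, T.Nonempty → ∃ v ∈ T, #{u ∈ T | G.Adj v u} ≤ k) :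
    ∃ c : V → Fin (k + 1), G.ProperOn c S := by
  induction S using Finset.strongInduction with
  | H S ih =>
  rcases S.eq_empty_or_nonempty with rfl | hne
  · exact ⟨fun _ => 0, by simp [ProperOn]⟩
  obtain ⟨v, hv, hdeg⟩ := h S subset_rfl hne
  obtain ⟨c, hc⟩ := ih (S.erase v) (erase_ssubset hv) fun T hT => h T (hT.trans (erase_subset v S))
  obtain ⟨i, -, hi⟩ := exists_mem_notMem_of_card_lt_card
    (s := {u ∈ S | G.Adj v u}.image c) (t := univ)
    ((card_image_le.trans hdeg).trans_lt (by simp))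
  exact ⟨Function.update c v i, hc.update hi⟩

theorem LocalAvgDegreeLE.exists_properOn [DecidableEq V] [DecidableRel G.Adj] {ℓ : ℕ}
    (hG : G.LocalAvgDegreeLE ℓ 3) {S : Finset V} (hS : #S ≤ ℓ) :
    ∃ c : V → Fin 4, G.ProperOn c S := by
  refine exists_properOn_of_forall_exists_card_adj_le S fun T hTS hT => ?_
  have hlt : ∑ v ∈ T, #{u ∈ T | G.Adj v u} < ∑ v ∈ T, 4 := by
    have := hG T ((card_le_card hTS).trans hS)
    rw [← card_interedges_eq_sum, sum_const, smul_eq_mul]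
    have := hT.card_pos
    omega
  obtain ⟨v, hv, hdeg⟩ := exists_lt_of_sum_lt hlt
  exact ⟨v, hv, by omega⟩

end SimpleGraph

open SimpleGraph

theorem Sparse.localAvgDegreeLE {V : Type*} [Fintype V] {G : SimpleGraph V} [DecidableRel G.Adj]
    {ℓ : ℕ} {ε : ℝ} (hsp : Sparse G ℓ (1 / 2 - ε)) (hε : 0 ≤ ε) : G.LocalAvgDegreeLE ℓ 3 := by
  intro X hX
  have h := hsp X (by rwa [Set.ncard_coe_finset])
  rw [Set.ncard_coe_finset] at h
  rw [G.card_interedges_self]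
  have hεX : 0 ≤ ε * #X := mul_nonneg hε (Nat.cast_nonneg _)
  exact_mod_cast (by linarith : (2 * (EdgesWithin G X).ncard : ℝ) ≤ 3 * #X)

def Clause.Satisfies {α : Type*} (a : α → Bool) (C : Clause α) : Prop :=
  ∃ l ∈ C, a l.1 = l.2

theorem IsResolvent.satisfies {α : Type*} [DecidableEq α] {a : α → Bool} {C₁ C₂ C : Clause α}
    (h : IsResolvent C₁ C₂ C) (h₁ : C₁.Satisfies a) (h₂ : C₂.Satisfies a) : C.Satisfies a := by
  obtain ⟨x, -, -, rfl⟩ := h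
  obtain ⟨l₁, hl₁, ha₁⟩ := h₁
  obtain ⟨l₂, hl₂, ha₂⟩ := h₂
  by_cases hx : l₁ = (x, true)
  · refine ⟨l₂, mem_union_right _ (mem_erase.2 ⟨?_, hl₂⟩), ha₂⟩
    rintro rfl
    subst hx
    simp_all
  · exact ⟨l₁, mem_union_left _ (mem_erase.2 ⟨hx, hl₁⟩), ha₁⟩

section Colouring

variable {V : Type*} {k : ℕ}

/-- Colourings are exactly the assignments satisfying the vertex axioms of `Col(G,k)`, so
`ColEntails G S C` says that the edge axioms on `S` together with all vertex axioms imply `C`. -/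
def colourAssignment (c : V → Fin k) (p : V × Fin k) : Bool :=
  decide (c p.1 = p.2)

def ColEntails (G : SimpleGraph V) (S : Finset V) (C : Clause (V × Fin k)) : Prop :=
  ∀ c : V → Fin k, G.ProperOn c S → C.Satisfies (colourAssignment c)

theorem ColEntails.mono {G : SimpleGraph V} {S T : Finset V} {C : Clause (V × Fin k)}
    (h : ColEntails G S C) (hST : S ⊆ T) : ColEntails G T C :=
  fun c hc => h c (hc.mono hST)

variable [DecidableEq V]

def negVertices (C : Clause (V × Fin k)) : Finset V :=
  {l ∈ C | l.2 = false}.image (·.1.1)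

theorem mem_negVertices {C : Clause (V × Fin k)} {v : V} :
    v ∈ negVertices C ↔ ∃ i, ((v, i), false) ∈ C := by
  simp [negVertices]

theorem colEntails_negVertices_of_mem_colCNF [Fintype V] {G : SimpleGraph V}
    {C : Clause (V × Fin k)} (hC : C ∈ ColCNF G k) : ColEntails G (negVertices C) C := by
  rcases hC with ⟨v, rfl⟩ | ⟨v, i, i', hii', rfl⟩ | ⟨u, v, i, huv, rfl⟩ <;> intro c hc
  · exact ⟨((v, c v), true), by simp, by simp [colourAssignment]⟩
  · by_cases hv : c v = i
    · exact ⟨((v, i'), false), by simp, by simp [colourAssignment, hv, hii']⟩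
    · exact ⟨((v, i), false), by simp, by simp [colourAssignment, hv]⟩
  · have hne : c u ≠ c v :=
      hc u (mem_negVertices.2 ⟨i, by simp⟩) v (mem_negVertices.2 ⟨i, by simp⟩) huv
    by_cases hu : c u = i
    · exact ⟨((v, i), false), by simp, by simp [colourAssignment, ← hu, hne.symm]⟩
    · exact ⟨((u, i), false), by simp, by simp [colourAssignment, hu]⟩

theorem ColEntails.resolve {G : SimpleGraph V} {C₁ C₂ C : Clause (V × Fin k)}
    {S₁ S₂ : Finset V} {x : V × Fin k} (hx₁ : (x, true) ∈ C₁) (hx₂ : (x, false) ∈ C₂)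
    (hC : C = C₁.erase (x, true) ∪ C₂.erase (x, false))
    (h₁ : ColEntails G (S₁ ∪ negVertices C₁) C₁) (h₂ : ColEntails G (S₂ ∪ negVertices C₂) C₂) :
    ColEntails G (insert x.1 (S₁ ∪ S₂) ∪ negVertices C) C := by
  have hN₁ : negVertices C₁ ⊆ negVertices C := by
    intro v hv
    obtain ⟨i, hi⟩ := mem_negVertices.1 hv
    exact mem_negVertices.2 ⟨i, hC ▸ mem_union_left _ (mem_erase.2 ⟨by simp, hi⟩)⟩
  have hN₂ : negVertices C₂ ⊆ insert x.1 (negVertices C) := by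
    intro v hv
    obtain ⟨i, hi⟩ := mem_negVertices.1 hv
    by_cases hvx : ((v, i), false) = (x, false)
    · rw [show v = x.1 from congrArg (·.1.1) hvx]
      exact mem_insert_self _ _
    · exact mem_insert_of_mem
        (mem_negVertices.2 ⟨i, hC ▸ mem_union_right _ (mem_erase.2 ⟨hvx, hi⟩)⟩)
  intro c hc
  refine IsResolvent.satisfies ⟨x, hx₁, hx₂, hC⟩ (h₁ c (hc.mono ?_)) (h₂ c (hc.mono ?_))
  all_goals grind

end Colouring

section WidthBound

variable {V : Type*} [DecidableEq V] {G : SimpleGraph V} [DecidableRel G.Adj]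

theorem ColEntails.exists_forced_literals {k : ℕ} {C : Clause (V × Fin k)} {R : Finset V} {v : V}
    (hR : ColEntails G (R ∪ negVertices C) C) (hv : v ∉ negVertices C)
    (hmin : ¬ ColEntails G (R.erase v ∪ negVertices C) C) :
    ∃ c : V → Fin k,
      ∀ i ∉ {u ∈ R ∪ negVertices C | G.Adj v u}.image c, ((v, i), true) ∈ C := by
  simp only [ColEntails, not_forall, exists_prop] at hmin
  obtain ⟨c, hc, hfalse⟩ := hmin
  refine ⟨c, fun i hi => ?_⟩
  rw [← erase_eq_of_notMem hv, ← erase_union_distrib] at hc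
  obtain ⟨⟨⟨u, j⟩, b⟩, hl, hsat⟩ := hR _ (hc.update hi)
  rcases eq_or_ne u v with rfl | hu
  · cases b
    · exact absurd (mem_negVertices.2 ⟨j, hl⟩) hv
    · simp only [colourAssignment, Function.update_self, decide_eq_true_eq] at hsat
      rwa [hsat]
  · exact absurd ⟨_, hl, by simpa [colourAssignment, Function.update_of_ne hu] using hsat⟩ hfalse

theorem ColEntails.two_mul_card_le_three_mul_card {ℓ : ℕ} {C : Clause (V × Fin 4)}
    {R : Finset V} (hR : ColEntails G (R ∪ negVertices C) C) (hG : G.LocalAvgDegreeLE ℓ 3)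
    (hmin : ∀ v ∈ R, ¬ ColEntails G (R.erase v ∪ negVertices C) C)
    (hdisj : Disjoint R (negVertices C)) (hcard : #R + #C ≤ ℓ) : 2 * #R ≤ 3 * #C := by
  set S := R ∪ negVertices C
  choose! c hc using fun v hv => hR.exists_forced_literals (disjoint_left.1 hdisj hv) (hmin v hv)
  set F : V → Finset (Fin 4) := fun v => ({u ∈ S | G.Adj v u}.image (c v))ᶜ
  have hfree : ∀ v ∈ R, 4 ≤ #(F v) + #{u ∈ S | G.Adj v u} := by
    intro v _
    have := card_image_le (s := {u ∈ S | G.Adj v u}) (f := c v)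
    simp only [F, card_compl, Fintype.card_fin]
    omega
  have hpos : ∑ v ∈ R, #(F v) ≤ #{l ∈ C | l.2 = true} := by
    rw [← card_sigma]
    refine card_le_card_of_injOn (fun p => ((p.1, p.2), true)) ?_ ?_
    · intro p hp
      rw [coe_sigma, Set.mem_sigma_iff] at hp
      exact mem_filter.2 ⟨hc p.1 hp.1 p.2 (mem_compl.1 hp.2), rfl⟩
    · rintro ⟨v, i⟩ - ⟨w, j⟩ - h
      simp only [Prod.mk.injEq, and_true] at h
      obtain ⟨rfl, rfl⟩ := h
      rfl
  have hsplit : #{l ∈ C | l.2 = true} + #{l ∈ C | l.2 = false} = #C := by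
    simpa using card_filter_add_card_filter_not (s := C) (fun l => l.2 = true)
  have hneg : #(negVertices C) ≤ #{l ∈ C | l.2 = false} := card_image_le
  have hS : #S ≤ #R + #(negVertices C) := card_union_le _ _
  have hdeg : 4 * #R ≤ ∑ v ∈ R, #(F v) + #(G.interedges R S) := by
    rw [card_interedges_eq_sum, ← sum_add_distrib, mul_comm, ← smul_eq_mul, ← sum_const]
    exact sum_le_sum hfree
  have hRS : 2 * #(G.interedges R S) ≤ #(G.interedges R R) + #(G.interedges S S) :=
    G.two_mul_card_interedges_le subset_union_left
  have hRR := hG R (by omega)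
  have hSS := hG S (by omega)
  omega

theorem ColEntails.exists_card_le {ℓ : ℕ} (hG : G.LocalAvgDegreeLE ℓ 3)
    {C : Clause (V × Fin 4)} {T : Finset V} {t : ℕ} (hT : ColEntails G (T ∪ negVertices C) C)
    (hTt : #T ≤ 2 * t + 1) (hCℓ : 2 * t + 1 + #C ≤ ℓ) (hCt : 3 * #C < 2 * (t + 1)) :
    ∃ S, #S ≤ t ∧ ColEntails G (S ∪ negVertices C) C := by
  obtain ⟨R, hRT, hRmin⟩ := exists_minimal_le_of_wellFoundedLT
    (fun R => ColEntails G (R ∪ negVertices C) C) (T \ negVertices C)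
    (by rwa [sdiff_union_self_eq_union])
  refine ⟨R, ?_, hRmin.prop⟩
  have hRcard : #R ≤ #T := card_le_card (hRT.trans sdiff_subset)
  have hmin : ∀ v ∈ R, ¬ ColEntails G (R.erase v ∪ negVertices C) C :=
    fun v hv h => notMem_erase v R (hRmin.2 h (erase_subset v R) hv)
  have := hRmin.prop.two_mul_card_le_three_mul_card hG hmin
    (disjoint_of_subset_left hRT sdiff_disjoint) (by omega)
  omega

theorem IsResolutionRefutation.exists_colEntails_card_le [Fintype V] {ℓ : ℕ}
    {D : List (Clause (V × Fin 4))} (hD : IsResolutionRefutation (ColCNF G 4) D)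
    (hG : G.LocalAvgDegreeLE ℓ 3) {t w : ℕ} (hw : ∀ C ∈ D, #C ≤ w) (hwℓ : 2 * t + 1 + w ≤ ℓ)
    (hwt : 3 * w < 2 * (t + 1)) :
    ∀ C ∈ D, ∃ S, #S ≤ t ∧ ColEntails G (S ∪ negVertices C) C := by
  suffices ∀ i (hi : i < D.length), ∃ S, #S ≤ t ∧ ColEntails G (S ∪ negVertices D[i]) D[i] by
    intro C hC
    obtain ⟨i, hi, rfl⟩ := List.getElem_of_mem hC
    exact this i hi
  intro i
  induction i using Nat.strong_induction_on with
  | _ i ih =>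
  intro hi
  rcases hD.2 i hi with hax | ⟨j, j', hj, hj', x, hx₁, hx₂, hC⟩
  · exact ⟨∅, by simp, by simpa using colEntails_negVertices_of_mem_colCNF hax⟩
  obtain ⟨S₁, hS₁, h₁⟩ := ih j hj (hj.trans hi)
  obtain ⟨S₂, hS₂, h₂⟩ := ih j' hj' (hj'.trans hi)
  have hCw := hw _ (List.getElem_mem hi)
  refine ColEntails.exists_card_le hG (ColEntails.resolve hx₁ hx₂ hC h₁ h₂) ?_
    (by omega) (by omega)
  calc #(insert x.1 (S₁ ∪ S₂)) ≤ #(S₁ ∪ S₂) + 1 := card_insert_le _ _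
    _ ≤ 2 * t + 1 := by have := card_union_le S₁ S₂; omega

end WidthBound

theorem stmt_3_general {V : Type*} [Fintype V] [DecidableEq V] (G : SimpleGraph V)
    (ℓ : ℕ) (ε : ℝ) (hε : 0 < ε) (hsp : Sparse G ℓ (1 / 2 - ε))
    (D : List (Clause (V × Fin 4))) (hD : IsResolutionRefutation (ColCNF G 4) D) :
    ∃ C ∈ D, (ℓ : ℝ) / 4 ≤ (C.card : ℝ) := by
  classical
  by_contra! hnarrow
  have hwidth : ∀ C ∈ D, 4 * #C < ℓ := fun C hC => by
    have := hnarrow C hC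
    exact_mod_cast (by linarith : (4 * #C : ℝ) < ℓ)
  have hempty : ∅ ∈ D := List.mem_of_getLast? hD.1
  have hℓ := hwidth ∅ hempty
  have hG := hsp.localAvgDegreeLE hε.le
  -- all widths are at most `w = (ℓ - 1) / 4`, and `t = 3w / 2` meets both constraints on `t`
  obtain ⟨S, hSt, hS⟩ := hD.exists_colEntails_card_le hG (w := (ℓ - 1) / 4)
    (t := 3 * ((ℓ - 1) / 4) / 2)
    (fun C hC => by have := hwidth C hC; omega) (by omega) (by omega) ∅ hempty
  obtain ⟨c, hc⟩ := hG.exists_properOn (S := S) (by omega)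
  obtain ⟨l, hl, -⟩ := hS c (by simpa [negVertices] using hc)
  exact notMem_empty l hl

/-- if `G` is `(ℓ, 1/2 - ε)`-sparse, then every resolution refutation of
`Col(G,4)` contains a clause of width at least `ℓ/4`. -/
theorem stmt_3 {V : Type*} [Fintype V] [DecidableEq V] (G : SimpleGraph V)
    (ℓ : ℕ) (ε : ℝ) (hℓ : 0 < ℓ) (hε : 0 < ε) (hsp : Sparse G ℓ (1 / 2 - ε))
    (D : List (Clause (V × Fin 4))) (hD : IsResolutionRefutation (ColCNF G 4) D) :
    ∃ C ∈ D, (ℓ : ℝ) / 4 ≤ (C.card : ℝ) :=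
  stmt_3_general G ℓ ε hε hsp D hD
end

section
/- Let G = (V,E) be a finite simple graph that is (ℓ, 1/2 − ε)-sparse for a positive integer ℓ and a real ε > 0. Then every set U ⊆ V of size at most ℓ/4 satisfies |cl(U)| ≤ 4|U| ≤ ℓ, where cl(U) denotes the unique closure of U with respect to the closedness notion 'every vertex outside the set has at most one neighbour in the set'. -/
/-- `U` is closed if every vertex outside `U` has at most one neighbour in `U`. -/
def ClosedSimple {V : Type*} (G : SimpleGraph V) (U : Set V) : Prop :=
  ∀ v ∉ U, ({u ∈ U | G.Adj v u}).ncard ≤ 1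

/-- `W` is a closure of `U`: a closed superset of `U` that is minimal with respect to
set inclusion among closed supersets of `U`. -/
def IsClosureSimple {V : Type*} (G : SimpleGraph V) (U W : Set V) : Prop :=
  ClosedSimple G W ∧ U ⊆ W ∧
    ∀ W', ClosedSimple G W' → U ⊆ W' → W' ⊆ W → W' = W

section Aux

variable {V : Type*} [Fintype V]

lemma edgesWithin_mono (G : SimpleGraph V) {A B : Set V} (h : A ⊆ B) :
    EdgesWithin G A ⊆ EdgesWithin G B :=
  fun _ he => ⟨he.1, fun v hv => h (he.2 v hv)⟩

lemma insert_edges (G : SimpleGraph V) {A : Set V} {v : V} (hv : v ∉ A)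
    (h2 : 2 ≤ ({u ∈ A | G.Adj v u}).ncard) :
    (EdgesWithin G A).ncard + 2 ≤ (EdgesWithin G (insert v A)).ncard := by
  set Ev : Set (Sym2 V) := (fun u => s(v, u)) '' {u ∈ A | G.Adj v u} with hEv
  have hinj : Function.Injective (fun u : V => s(v, u)) := fun a b hab =>
    Sym2.congr_right.mp hab
  have hcard : ({u ∈ A | G.Adj v u}).ncard ≤ Ev.ncard := by
    rw [hEv, Set.ncard_image_of_injective _ hinj]
  have hdisj : Disjoint (EdgesWithin G A) Ev := by
    rw [Set.disjoint_left]
    rintro e ⟨_, hmem⟩ ⟨u, _, rfl⟩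
    exact hv (hmem v (by simp))
  have hsub : EdgesWithin G A ∪ Ev ⊆ EdgesWithin G (insert v A) := by
    rintro e (he | ⟨u, ⟨huA, hadj⟩, rfl⟩)
    · exact edgesWithin_mono G (Set.subset_insert v A) he
    · refine ⟨(SimpleGraph.mem_edgeSet G).2 hadj, fun w hw => ?_⟩
      rcases Sym2.mem_iff.1 hw with rfl | rfl
      · exact Set.mem_insert _ _
      · exact Set.mem_insert_of_mem _ huA
  calc (EdgesWithin G A).ncard + 2 ≤ (EdgesWithin G A).ncard + Ev.ncard := by omega
    _ = (EdgesWithin G A ∪ Ev).ncard := (Set.ncard_union_eq hdisj).symm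
    _ ≤ (EdgesWithin G (insert v A)).ncard := Set.ncard_le_ncard hsub (Set.toFinite _)

lemma union_edges (G : SimpleGraph V) (A : Set V) (T : Finset V)
    (hdisj : ∀ v ∈ T, v ∉ A)
    (h : ∀ v ∈ T, 2 ≤ ({u ∈ A | G.Adj v u}).ncard) :
    (EdgesWithin G A).ncard + 2 * T.card ≤ (EdgesWithin G (A ∪ ↑T)).ncard := by
  classical
  induction T using Finset.induction_on with
  | empty => simp
  | @insert v T hvT ih =>
    have h1 : ∀ w ∈ T, w ∉ A := fun w hw => hdisj w (Finset.mem_insert_of_mem hw)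
    have h2 : ∀ w ∈ T, 2 ≤ ({u ∈ A | G.Adj w u}).ncard :=
      fun w hw => h w (Finset.mem_insert_of_mem hw)
    have ih' := ih h1 h2
    have hvA : v ∉ A ∪ ↑T := by
      rintro (hv | hv)
      · exact hdisj v (Finset.mem_insert_self _ _) hv
      · exact hvT hv
    have hmono : {u ∈ A | G.Adj v u} ⊆ {u ∈ A ∪ ↑T | G.Adj v u} :=
      fun u hu => ⟨Or.inl hu.1, hu.2⟩
    have h2v : 2 ≤ ({u ∈ A ∪ ↑T | G.Adj v u}).ncard :=
      le_trans (h v (Finset.mem_insert_self _ _)) (Set.ncard_le_ncard hmono (Set.toFinite _))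
    have key := insert_edges G hvA h2v
    have hset : A ∪ ↑(insert v T) = insert v (A ∪ ↑T) := by
      ext w; simp [or_comm, or_assoc, or_left_comm]
    rw [hset, Finset.card_insert_of_notMem hvT]
    omega

/-- one closure step: add all vertices with at least two neighbours. -/
def closStep (G : SimpleGraph V) (S : Set V) : Set V :=
  S ∪ {v | 2 ≤ ({u ∈ S | G.Adj v u}).ncard}

/-- iterated closure steps. -/
def closIter (G : SimpleGraph V) (U : Set V) : ℕ → Set V
  | 0 => U
  | n+1 => closStep G (closIter G U n)

lemma subset_closStep (G : SimpleGraph V) (S : Set V) : S ⊆ closStep G S :=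
  Set.subset_union_left

lemma closStep_subset {G : SimpleGraph V} {S W : Set V} (hW : ClosedSimple G W)
    (hSW : S ⊆ W) : closStep G S ⊆ W := by
  rintro v (hv | hv)
  · exact hSW hv
  · simp only [Set.mem_setOf_eq] at hv
    by_contra hvW
    have h1 := hW v hvW
    have hmono : {u ∈ S | G.Adj v u} ⊆ {u ∈ W | G.Adj v u} :=
      fun u hu => ⟨hSW hu.1, hu.2⟩
    have := Set.ncard_le_ncard hmono (Set.toFinite _)
    omega

lemma subset_closIter (G : SimpleGraph V) (U : Set V) (n : ℕ) :
    U ⊆ closIter G U n := by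
  induction n with
  | zero => exact subset_rfl
  | succ n ih => exact ih.trans (subset_closStep G _)

lemma closIter_subset {G : SimpleGraph V} {U W : Set V} (hW : ClosedSimple G W)
    (hUW : U ⊆ W) (n : ℕ) : closIter G U n ⊆ W := by
  induction n with
  | zero => exact hUW
  | succ n ih => exact closStep_subset hW ih

lemma closIter_stab (G : SimpleGraph V) (U : Set V) (m : ℕ) :
    closIter G U m = closIter G U (m+1) ∨ m ≤ (closIter G U m).ncard := by
  induction m with
  | zero => exact Or.inr (Nat.zero_le _)
  | succ m ih =>
    rcases ih with h | h
    · left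
      show closStep G (closIter G U m) = closStep G (closIter G U (m+1))
      rw [← h]
    · by_cases heq : closIter G U m = closIter G U (m+1)
      · left
        show closStep G (closIter G U m) = closStep G (closIter G U (m+1))
        rw [← heq]
      · right
        have hss : closIter G U m ⊂ closIter G U (m+1) :=
          (subset_closStep G _).ssubset_of_ne heq
        have := Set.ncard_lt_ncard hss (Set.toFinite _)
        omega

lemma closIter_fixed (G : SimpleGraph V) (U : Set V) :
    closStep G (closIter G U (Fintype.card V + 1)) = closIter G U (Fintype.card V + 1) := by
  rcases closIter_stab G U (Fintype.card V + 1) with h | h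
  · exact h.symm
  · exfalso
    have : (closIter G U (Fintype.card V + 1)).ncard ≤ Fintype.card V := by
      calc (closIter G U (Fintype.card V + 1)).ncard
          ≤ (Set.univ : Set V).ncard := Set.ncard_le_ncard (Set.subset_univ _) (Set.toFinite _)
        _ = Fintype.card V := by rw [Set.ncard_univ, Nat.card_eq_fintype_card]
    omega

end Aux

/-- if `G` is `(ℓ, 1/2 - ε)`-sparse and `|U| ≤ ℓ/4`, then the closure of
`U` satisfies `|cl(U)| ≤ 4|U| ≤ ℓ`. -/
theorem stmt_5 {V : Type*} [Fintype V] (G : SimpleGraph V) (ℓ : ℕ) (ε : ℝ)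
    (hℓ : 0 < ℓ) (hε : 0 < ε) (hsp : Sparse G ℓ (1 / 2 - ε))
    (U : Set V) (hU : (U.ncard : ℝ) ≤ (ℓ : ℝ) / 4) :
    ∀ W : Set V, IsClosureSimple G U W → W.ncard ≤ 4 * U.ncard ∧ 4 * U.ncard ≤ ℓ := by
  classical
  intro W hW
  obtain ⟨hWclosed, hUW, hWmin⟩ := hW
  have h4Uℓ : 4 * U.ncard ≤ ℓ := by
    have : (4 * U.ncard : ℝ) ≤ ℓ := by linarith
    exact_mod_cast this
  -- main invariant
  have key : ∀ m : ℕ, (closIter G U m).ncard ≤ ℓ ∧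
      2 * (closIter G U m).ncard ≤ (EdgesWithin G (closIter G U m)).ncard + 2 * U.ncard := by
    intro m
    induction m with
    | zero =>
      constructor
      · have hℓ0 : (0 : ℝ) ≤ (ℓ : ℝ) := Nat.cast_nonneg _
        have : (U.ncard : ℝ) ≤ (ℓ : ℝ) := by linarith
        exact_mod_cast this
      · have h0 : closIter G U 0 = U := rfl
        rw [h0]; omega
    | succ m ih =>
      obtain ⟨ihℓ, ihE⟩ := ih
      set A := closIter G U m with hA
      have hAsub : A ⊆ closIter G U (m+1) := subset_closStep G A
      -- property of new vertices
      have hnew : ∀ v ∈ closIter G U (m+1) \ A, 2 ≤ ({u ∈ A | G.Adj v u}).ncard := by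
        rintro v ⟨hv1, hv2⟩
        rcases hv1 with hv | hv
        · exact absurd hv hv2
        · exact hv
      -- general bound for intermediate sets
      have inter_bound : ∀ r : Set V, A ⊆ r → r ⊆ closIter G U (m+1) →
          r.ncard ≤ ℓ → (2 * r.ncard : ℝ) ≤ (1 + (1/2 - ε)) * r.ncard + 2 * U.ncard := by
        intro r hAr hr hrℓ
        have hT : r = A ∪ ↑(r \ A).toFinset := by
          rw [Set.coe_toFinset]
          rw [Set.union_diff_cancel hAr]
        have hTd : ∀ v ∈ (r \ A).toFinset, v ∉ A := by
          intro v hv; exact ((Set.mem_toFinset.1 hv).2)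
        have hTn : ∀ v ∈ (r \ A).toFinset, 2 ≤ ({u ∈ A | G.Adj v u}).ncard := by
          intro v hv
          have hv' := Set.mem_toFinset.1 hv
          exact hnew v ⟨hr hv'.1, hv'.2⟩
        have hE := union_edges G A (r \ A).toFinset hTd hTn
        rw [← hT] at hE
        have hcardT : (r \ A).toFinset.card = (r \ A).ncard := by
          rw [Set.ncard_eq_toFinset_card']
        have hcardr : (r \ A).ncard + A.ncard = r.ncard :=
          Set.ncard_diff_add_ncard_of_subset hAr (Set.toFinite _)
        have hsps := hsp r hrℓ
        have hnat : 2 * r.ncard ≤ (EdgesWithin G r).ncard + 2 * U.ncard := by omega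
        have : ((2 * r.ncard : ℕ) : ℝ) ≤ ((EdgesWithin G r).ncard + 2 * U.ncard : ℕ) := by
          exact_mod_cast hnat
        push_cast at this ⊢
        linarith
      -- size bound
      have hsize : (closIter G U (m+1)).ncard ≤ ℓ := by
        by_contra hbig
        push_neg at hbig
        obtain ⟨r, hAr, hr, hrcard⟩ :=
          Set.exists_subsuperset_card_eq hAsub ihℓ (le_of_lt hbig)
        have hb := inter_bound r hAr hr (le_of_eq hrcard)
        rw [hrcard] at hb
        have hℓR : (0 : ℝ) < ℓ := by exact_mod_cast hℓ
        nlinarith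
      have hEdge := inter_bound _ hAsub subset_rfl hsize
      constructor
      · exact hsize
      · -- recover the nat edge inequality directly
        have hT : closIter G U (m+1) = A ∪ ↑((closIter G U (m+1)) \ A).toFinset := by
          rw [Set.coe_toFinset, Set.union_diff_cancel hAsub]
        have hTd : ∀ v ∈ ((closIter G U (m+1)) \ A).toFinset, v ∉ A :=
          fun v hv => (Set.mem_toFinset.1 hv).2
        have hTn : ∀ v ∈ ((closIter G U (m+1)) \ A).toFinset, 2 ≤ ({u ∈ A | G.Adj v u}).ncard :=
          fun v hv => hnew v (Set.mem_toFinset.1 hv)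
        have hE := union_edges G A _ hTd hTn
        rw [← hT] at hE
        have hcardT : ((closIter G U (m+1)) \ A).toFinset.card = ((closIter G U (m+1)) \ A).ncard := by
          rw [Set.ncard_eq_toFinset_card']
        have hcardr : ((closIter G U (m+1)) \ A).ncard + A.ncard = (closIter G U (m+1)).ncard :=
          Set.ncard_diff_add_ncard_of_subset hAsub (Set.toFinite _)
        omega
  -- the stabilized set
  set N := Fintype.card V + 1 with hN
  set C := closIter G U N with hC
  have hfix : closStep G C = C := closIter_fixed G U
  have hCclosed : ClosedSimple G C := by
    intro v hv
    by_contra h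
    push_neg at h
    have : v ∈ closStep G C := Or.inr (show 2 ≤ ({u ∈ C | G.Adj v u}).ncard by omega)
    rw [hfix] at this
    exact hv this
  have hUC : U ⊆ C := subset_closIter G U N
  have hCW : C ⊆ W := closIter_subset hWclosed hUW N
  have hCeq : C = W := hWmin C hCclosed hUC hCW
  obtain ⟨hCℓ, hCE⟩ := key N
  have hsps := hsp C hCℓ
  have hnatcast : ((2 * C.ncard : ℕ) : ℝ) ≤ ((EdgesWithin G C).ncard + 2 * U.ncard : ℕ) := by
    exact_mod_cast hCE
  have hfinal : (C.ncard : ℝ) ≤ 4 * U.ncard := by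
    push_cast at hnatcast
    have hC0 : (0 : ℝ) ≤ (C.ncard : ℝ) := Nat.cast_nonneg _
    nlinarith
  refine ⟨?_, h4Uℓ⟩
  rw [← hCeq]
  exact_mod_cast hfinal
end

section
/- Let G = (V,E) be a finite simple graph that is (ℓ, 1/2 − ε)-sparse for a positive integer ℓ and a real ε > 0. Let U ⊆ V be a closed set of size at most ℓ and let χ be a proper 4-colouring of the induced subgraph G[U]. Then for every set W with U ⊆ W ⊆ V and |W| ≤ ℓ, the colouring χ extends to a proper 4-colouring of G[W]. -/
/-
Sparseness with density below `3/2` forces every nonempty set `S` of at most `ℓ` vertices to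
contain a vertex with at most two neighbours in `S`: otherwise the degree sum in `G[S]` would
give `3|S| ≤ 2|E(G[S])| < 3|S|`. Taking `S = W \ U`, such a vertex has, by closedness, at most
one further neighbour in `U`, so at most three neighbours in `W`. Colour `W \ {v}` by induction
on `|W \ U|` and give `v` a fourth colour missed by its neighbours.
-/

open Set Finset

namespace SimpleGraph

variable {V α : Type*} (G : SimpleGraph V)

def IsProperColoringOn (W : Set V) (χ : V → α) : Prop :=
  ∀ u ∈ W, ∀ v ∈ W, G.Adj u v → χ u ≠ χ v

variable {G}

lemma image_edgeSet_induce_subset_edgesWithin (S : Set V) :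
    Sym2.map ((↑) : S → V) '' (G.induce S).edgeSet ⊆ EdgesWithin G S := by
  rintro e ⟨e', he', rfl⟩
  induction e' with
  | _ a b =>
    refine ⟨he', fun v hv => ?_⟩
    rcases Sym2.mem_iff.mp (Sym2.map_mk _ a b ▸ hv) with rfl | rfl
    exacts [a.2, b.2]

lemma degree_induce_eq_ncard (S : Set V) (v : S) [Fintype ((G.induce S).neighborSet v)] :
    (G.induce S).degree v = {u ∈ S | G.Adj v u}.ncard := by
  have himage : (↑) '' (G.induce S).neighborSet v = {u ∈ S | G.Adj v u} := by
    ext u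
    constructor
    · rintro ⟨u', hu', rfl⟩
      exact ⟨u'.2, hu'⟩
    · rintro ⟨hu, hadj⟩
      exact ⟨⟨u, hu⟩, hadj, rfl⟩
  rw [← himage, ncard_image_of_injective _ Subtype.val_injective,
    ← card_neighborFinset_eq_degree, neighborFinset_def, ← ncard_eq_toFinset_card']

lemma mul_ncard_le_two_mul_ncard_edgesWithin [Finite V] {S : Set V} {k : ℕ}
    (hk : ∀ v ∈ S, k ≤ {u ∈ S | G.Adj v u}.ncard) :
    k * S.ncard ≤ 2 * (EdgesWithin G S).ncard := by
  classical
  have : Fintype S := Fintype.ofFinite S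
  have hedges : #(G.induce S).edgeFinset ≤ (EdgesWithin G S).ncard := by
    rw [← ncard_coe_finset, coe_edgeFinset,
      ← ncard_image_of_injective _ (Sym2.map.injective Subtype.val_injective)]
    exact ncard_le_ncard (image_edgeSet_induce_subset_edgesWithin S)
  calc k * S.ncard = ∑ _v : S, k := by simp [mul_comm]
    _ ≤ ∑ v : S, (G.induce S).degree v :=
        Finset.sum_le_sum fun v _ => (degree_induce_eq_ncard (G := G) S v).symm ▸ hk v v.2
    _ = 2 * #(G.induce S).edgeFinset := sum_degrees_eq_twice_card_edges _
    _ ≤ 2 * (EdgesWithin G S).ncard := by gcongr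

lemma IsProperColoringOn.exists_update [Finite V] [Finite α] [DecidableEq V] {W : Set V}
    {χ : V → α} {v : V}
    (hχ : G.IsProperColoringOn (W \ {v}) χ) (hv : {u ∈ W | G.Adj v u}.ncard < Nat.card α) :
    ∃ c, G.IsProperColoringOn W (Function.update χ v c) := by
  obtain ⟨c, hc⟩ : ∃ c, c ∉ χ '' {u ∈ W | G.Adj v u} := by
    by_contra! hall
    have := (ncard_image_le (f := χ) (toFinite _)).trans_lt hv
    rw [eq_univ_of_forall hall, ncard_univ] at this
    exact this.false
  refine ⟨c, fun u hu w hw hadj => ?_⟩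
  rcases eq_or_ne u v with rfl | huv
  · rw [Function.update_self, Function.update_of_ne hadj.ne.symm]
    exact fun h => hc ⟨w, ⟨hw, hadj⟩, h.symm⟩
  rcases eq_or_ne w v with rfl | hwv
  · rw [Function.update_self, Function.update_of_ne huv]
    exact fun h => hc ⟨u, ⟨hu, hadj.symm⟩, h⟩
  rw [Function.update_of_ne huv, Function.update_of_ne hwv]
  exact hχ u ⟨hu, huv⟩ w ⟨hw, hwv⟩ hadj

lemma exists_extension_of_forall_exists_ncard_adj_lt [Finite V] [Finite α] {U W : Set V}
    (hUW : U ⊆ W) {χ : V → α} (hχ : G.IsProperColoringOn U χ)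
    (hlow : ∀ W' ⊆ W, U ⊆ W' → (W' \ U).Nonempty →
      ∃ v ∈ W' \ U, {u ∈ W' | G.Adj v u}.ncard < Nat.card α) :
    ∃ χ' : V → α, (∀ u ∈ U, χ' u = χ u) ∧ G.IsProperColoringOn W χ' := by
  classical
  induction hn : (W \ U).ncard generalizing W with
  | zero =>
    have hWU : W ⊆ U := sdiff_eq_empty.mp ((ncard_eq_zero (toFinite _)).mp hn)
    exact ⟨χ, fun _ _ => rfl, fun u hu w hw => hχ u (hWU hu) w (hWU hw)⟩
  | succ n ih =>
    obtain ⟨v, hvWU, hvdeg⟩ :=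
      hlow W subset_rfl hUW (nonempty_of_ncard_ne_zero (by omega))
    have hUW' : U ⊆ W \ {v} := fun u hu => ⟨hUW hu, ne_of_mem_of_not_mem hu hvWU.2⟩
    have hcard : ((W \ {v}) \ U).ncard = n := by
      rw [sdiff_sdiff_comm, ncard_sdiff_singleton_of_mem hvWU, hn, Nat.add_sub_cancel]
    obtain ⟨χ', hagree, hχ'⟩ :=
      ih hUW' (fun W' hW' => hlow W' (hW'.trans sdiff_subset)) hcard
    obtain ⟨c, hc⟩ := hχ'.exists_update hvdeg
    refine ⟨Function.update χ' v c, fun u hu => ?_, hc⟩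
    rw [Function.update_of_ne (ne_of_mem_of_not_mem hu hvWU.2), hagree u hu]

end SimpleGraph

section

variable {V : Type*} {G : SimpleGraph V}

lemma Sparse.exists_mem_ncard_adj_le_two [Finite V] {ℓ : ℕ} {ε : ℝ}
    (hsp : Sparse G ℓ (1 / 2 - ε)) (hε : 0 < ε) {S : Set V} (hS : S.Nonempty)
    (hSℓ : S.ncard ≤ ℓ) : ∃ v ∈ S, {u ∈ S | G.Adj v u}.ncard ≤ 2 := by
  by_contra! hdeg
  have hdouble : ((3 * S.ncard : ℕ) : ℝ) ≤ ((2 * (EdgesWithin G S).ncard : ℕ) : ℝ) := by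
    exact_mod_cast SimpleGraph.mul_ncard_le_two_mul_ncard_edgesWithin hdeg
  have hpos : (0 : ℝ) < S.ncard := by exact_mod_cast hS.ncard_pos
  push_cast at hdouble
  nlinarith [hsp S hSℓ]

lemma ClosedSimple.ncard_adj_le [Finite V] {U : Set V} (hU : ClosedSimple G U) {v : V}
    (hv : v ∉ U) (W : Set V) :
    {u ∈ W | G.Adj v u}.ncard ≤ {u ∈ W \ U | G.Adj v u}.ncard + 1 := by
  have hsplit : {u ∈ W | G.Adj v u} ⊆ {u ∈ W \ U | G.Adj v u} ∪ {u ∈ U | G.Adj v u} := by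
    rintro u ⟨huW, hadj⟩
    by_cases huU : u ∈ U
    · exact Or.inr ⟨huU, hadj⟩
    · exact Or.inl ⟨⟨huW, huU⟩, hadj⟩
  calc {u ∈ W | G.Adj v u}.ncard
      ≤ ({u ∈ W \ U | G.Adj v u} ∪ {u ∈ U | G.Adj v u}).ncard := ncard_le_ncard hsplit
    _ ≤ {u ∈ W \ U | G.Adj v u}.ncard + {u ∈ U | G.Adj v u}.ncard := ncard_union_le _ _
    _ ≤ {u ∈ W \ U | G.Adj v u}.ncard + 1 := by gcongr; exact hU v hv

end

theorem stmt_6_general {V : Type*} [Fintype V] (G : SimpleGraph V) (ℓ : ℕ) (ε : ℝ)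
    (hε : 0 < ε) (hsp : Sparse G ℓ (1 / 2 - ε))
    (U : Set V) (hUcl : ClosedSimple G U)
    (χ : V → Fin 4) (hχ : ∀ u ∈ U, ∀ v ∈ U, G.Adj u v → χ u ≠ χ v)
    (W : Set V) (hUW : U ⊆ W) (hW : W.ncard ≤ ℓ) :
    ∃ χ' : V → Fin 4, (∀ u ∈ U, χ' u = χ u) ∧
      ∀ u ∈ W, ∀ v ∈ W, G.Adj u v → χ' u ≠ χ' v := by
  refine SimpleGraph.exists_extension_of_forall_exists_ncard_adj_lt hUW hχ
    fun W' hW'W _ hne => ?_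
  have hℓ : (W' \ U).ncard ≤ ℓ :=
    (ncard_le_ncard (sdiff_subset.trans hW'W)).trans hW
  obtain ⟨v, hv, hdeg⟩ := hsp.exists_mem_ncard_adj_le_two hε hne hℓ
  refine ⟨v, hv, ?_⟩
  rw [Nat.card_eq_fintype_card, Fintype.card_fin]
  have := hUcl.ncard_adj_le hv.2 W'
  omega

/-- in an `(ℓ, 1/2 - ε)`-sparse graph, a proper `4`-colouring of a
closed set `U` of size at most `ℓ` extends to a proper `4`-colouring of any set
`W ⊇ U` of size at most `ℓ`. -/
theorem stmt_6 {V : Type*} [Fintype V] (G : SimpleGraph V) (ℓ : ℕ) (ε : ℝ)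
    (hℓ : 0 < ℓ) (hε : 0 < ε) (hsp : Sparse G ℓ (1 / 2 - ε))
    (U : Set V) (hUcl : ClosedSimple G U) (hUcard : U.ncard ≤ ℓ)
    (χ : V → Fin 4) (hχ : ∀ u ∈ U, ∀ v ∈ U, G.Adj u v → χ u ≠ χ v)
    (W : Set V) (hUW : U ⊆ W) (hW : W.ncard ≤ ℓ) :
    ∃ χ' : V → Fin 4, (∀ u ∈ U, χ' u = χ u) ∧
      ∀ u ∈ W, ∀ v ∈ W, G.Adj u v → χ' u ≠ χ' v :=
  stmt_6_general G ℓ ε hε hsp U hUcl χ hχ W hUW hW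
end

section
/- Let F be a field, D a positive integer, and 𝒫 a set of polynomials in F[x₁,…,xₙ]. If there exists a degree-D pseudo-reduction for 𝒫, i.e. an F-linear operator R̃ : F[x₁,…,xₙ] → F[x₁,…,xₙ] such that (1) R̃(1) = 1, (2) R̃(P) = 0 for every P ∈ 𝒫, and (3) R̃(xᵢ·m) = R̃(xᵢ·R̃(m)) for every monomial m of degree at most D − 1 and every variable xᵢ, then every polynomial calculus refutation of 𝒫 over F has degree strictly greater than D. -/
/-- A polynomial calculus derivation from `P`: every polynomial in the sequence is an
axiom from `P`, a linear combination of two earlier polynomials, or a variable times an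
earlier polynomial. -/
def IsPCDerivation {σ F : Type*} [CommSemiring F]
    (P : Set (MvPolynomial σ F)) (π : List (MvPolynomial σ F)) : Prop :=
  ∀ i (hi : i < π.length), π[i] ∈ P ∨
    (∃ j j', ∃ (hj : j < i) (hj' : j' < i), ∃ a b : F,
      π[i] = a • π[j]'(hj.trans hi) + b • π[j']'(hj'.trans hi)) ∨
    (∃ j, ∃ (hj : j < i), ∃ x : σ,
      π[i] = MvPolynomial.X x * π[j]'(hj.trans hi))

/-- A polynomial calculus refutation of `P`: a derivation from `P` ending with the
constant polynomial `1`. -/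
def IsPCRefutation {σ F : Type*} [CommSemiring F]
    (P : Set (MvPolynomial σ F)) (π : List (MvPolynomial σ F)) : Prop :=
  IsPCDerivation P π ∧ π.getLast? = some 1


open MvPolynomial in
lemma key_lemma {F : Type*} [Field F] {n : ℕ} (D : ℕ)
    (R : MvPolynomial (Fin n) F →ₗ[F] MvPolynomial (Fin n) F)
    (h3 : ∀ m : Fin n →₀ ℕ, (m.sum fun _ e => e) ≤ D - 1 → ∀ i : Fin n,
      R (MvPolynomial.X i * MvPolynomial.monomial m 1) =
        R (MvPolynomial.X i * R (MvPolynomial.monomial m 1)))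
    (p : MvPolynomial (Fin n) F) (hp : p.totalDegree ≤ D - 1) (i : Fin n) :
    R (X i * p) = R (X i * R p) := by
  conv_lhs => rw [p.as_sum]
  conv_rhs => rw [p.as_sum]
  have hmono : ∀ m ∈ p.support, (monomial m) (coeff m p) = coeff m p • monomial m 1 := by
    intro m _
    rw [smul_monomial, smul_eq_mul, mul_one]
  rw [Finset.sum_congr rfl hmono, Finset.mul_sum, map_sum, map_sum]
  simp only [mul_smul_comm, map_smul, Finset.smul_sum, Finset.mul_sum]
  rw [map_sum]
  refine Finset.sum_congr rfl fun m hm => ?_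
  rw [map_smul]
  congr 1
  exact h3 m (le_trans (le_totalDegree hm) hp) i

/-- if there is a degree-`D` pseudo-reduction for `P`, then every
polynomial calculus refutation of `P` has degree strictly greater than `D`. -/
theorem stmt_7 {F : Type*} [Field F] {n : ℕ} (D : ℕ) (hD : 0 < D)
    (P : Set (MvPolynomial (Fin n) F))
    (R : MvPolynomial (Fin n) F →ₗ[F] MvPolynomial (Fin n) F)
    (h1 : R 1 = 1)
    (h2 : ∀ p ∈ P, R p = 0)
    (h3 : ∀ m : Fin n →₀ ℕ, (m.sum fun _ e => e) ≤ D - 1 → ∀ i : Fin n,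
      R (MvPolynomial.X i * MvPolynomial.monomial m 1) =
        R (MvPolynomial.X i * R (MvPolynomial.monomial m 1))) :
    ∀ π : List (MvPolynomial (Fin n) F), IsPCRefutation P π →
      ∃ p ∈ π, D < p.totalDegree := by
  intro π hπ
  by_contra hcon
  push_neg at hcon
  obtain ⟨hder, hlast⟩ := hπ
  have hzero : ∀ i (hi : i < π.length), R π[i] = 0 := by
    intro i
    induction i using Nat.strong_induction_on with
    | _ i IH =>
      intro hi
      rcases hder i hi with hax | ⟨j, j', hj, hj', a, b, heq⟩ | ⟨j, hj, x, heq⟩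
      · exact h2 _ hax
      · rw [heq, map_add, map_smul, map_smul, IH j hj (hj.trans hi),
          IH j' hj' (hj'.trans hi), smul_zero, smul_zero, add_zero]
      · rw [heq]
        by_cases h0 : π[j]'(hj.trans hi) = 0
        · rw [h0, mul_zero, map_zero]
        · have htd : (π[j]'(hj.trans hi)).totalDegree ≤ D - 1 := by
            have hle : (MvPolynomial.X x * π[j]'(hj.trans hi)).totalDegree ≤ D := by
              rw [← heq]; exact hcon _ (List.getElem_mem hi)
            obtain ⟨m, hm, hms⟩ := Finset.exists_mem_eq_sup _
              (MvPolynomial.support_nonempty.mpr h0) (fun m : Fin n →₀ ℕ => m.sum fun _ e => e)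
            have hsupp : (Finsupp.single x 1 + m) ∈
                (MvPolynomial.X x * π[j]'(hj.trans hi)).support := by
              rw [MvPolynomial.mem_support_iff, MvPolynomial.coeff_X_mul]
              exact MvPolynomial.mem_support_iff.mp hm
            have hsum := le_trans (MvPolynomial.le_totalDegree hsupp) hle
            rw [Finsupp.sum_add_index (by simp) (by intros; rfl), Finsupp.sum_single_index rfl]
              at hsum
            rw [MvPolynomial.totalDegree, hms]
            omega
          rw [key_lemma D R h3 _ htd x, IH j hj (hj.trans hi), mul_zero, map_zero]
  have hmem : (1 : MvPolynomial (Fin n) F) ∈ π := by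
    obtain ⟨hne, hx⟩ := List.mem_getLast?_eq_getLast (Option.mem_def.mpr hlast)
    rw [hx]; exact List.getLast_mem hne
  obtain ⟨i, hi, hval⟩ := List.mem_iff_getElem.mp hmem
  have := hzero i hi
  rw [hval, h1] at this
  exact one_ne_zero this
end

section
/- Let F be a field, fix an admissible order ≺ on the monomials of F[x₁,…,xₙ], let D be a positive integer, let 𝒫 be a set of polynomials in F[x₁,…,xₙ] each of degree at most D, and let S be a 𝒫-support. Suppose that every monomial m of degree at most D satisfies: (Satisfiability condition) the set of polynomials S(m) has a common root in Fⁿ; and (Reducibility condition) for all monomials m′, if S(m′) ⊆ S(m) then m′ is reducible modulo the ideal generated by S(m′) if and only if m′ is reducible modulo the ideal generated by S(m). Then every polynomial calculus refutation of 𝒫 over F has degree strictly greater than D. -/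
/-!
Reduce every monomial `v` modulo `⟨S v⟩`: by well-founded recursion along `≺`, `v` is rewritten
into a combination `normalForm v` of monomials `w ≼ v` with `S w ⊆ S v` that are irreducible
modulo their own ideal `⟨S w⟩`. The support axioms keep the recursion inside `⟨S v⟩`: before
reducing, the variables outside `v` and `S v` are set to `0`, and the remaining monomials below `v`
have their `S`-sets inside `S v`. The linear extension `reduce` of `normalForm` satisfies
`p - reduce p ∈ ⟨S Y⟩` whenever every monomial `t` of `p` has `S t ⊆ S Y`.

If `deg m ≤ D`, the reducibility condition makes every polynomial of `⟨S m⟩` built from such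
irreducible monomials vanish, since its leading monomial would be reducible. Hence `reduce` kills
every axiom and satisfies `reduce (x * t) = reduce (x * reduce t)` in degree `≤ D`, so it kills
every line of a derivation of degree `≤ D`. But `reduce 1 ≠ 0`, since the satisfiability condition
gives `1 ∉ ⟨S ∅⟩`.
-/

/-- An admissible order on the monomials (exponent vectors) of a polynomial ring:
a total well-order in which `1` (the zero exponent vector) is smallest and which
respects multiplication (addition of exponent vectors). -/
structure AdmissibleOrder (σ : Type*) where
  lt : (σ →₀ ℕ) → (σ →₀ ℕ) → Prop
  trans : ∀ {a b c}, lt a b → lt b c → lt a c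
  irrefl : ∀ a, ¬ lt a a
  total : ∀ a b, a = b ∨ lt a b ∨ lt b a
  wf : WellFounded lt
  zero_lt : ∀ m, m ≠ 0 → lt 0 m
  add_lt : ∀ (m : σ →₀ ℕ) {m₁ m₂}, lt m₁ m₂ → lt (m + m₁) (m + m₂)

/-- `μ` is the leading monomial of `p`. -/
def IsLeadingMonomial {σ F : Type*} [CommSemiring F] (O : AdmissibleOrder σ)
    (p : MvPolynomial σ F) (μ : σ →₀ ℕ) : Prop :=
  μ ∈ p.support ∧ ∀ ν ∈ p.support, ν ≠ μ → O.lt ν μ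

/-- A monomial `μ` is reducible modulo an ideal `I` if it is the leading monomial of
some polynomial of `I`. -/
def Reducible {σ F : Type*} [CommSemiring F] (O : AdmissibleOrder σ)
    (I : Ideal (MvPolynomial σ F)) (μ : σ →₀ ℕ) : Prop :=
  ∃ p ∈ I, IsLeadingMonomial O p μ

/-- The total degree of a monomial (exponent vector). -/
def monDeg {σ : Type*} (m : σ →₀ ℕ) : ℕ := m.sum fun _ e => e

/-- A `P`-support: a map `S` from sets of variables to subsets of `P`; `S` is applied
to a monomial `m` via its set of variables `m.support`. -/
structure IsSupport {σ F : Type*} [CommSemiring F] [DecidableEq σ]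
    (O : AdmissibleOrder σ) (P : Set (MvPolynomial σ F))
    (S : Finset σ → Set (MvPolynomial σ F)) : Prop where
  subset_ambient : ∀ Y, S Y ⊆ P
  prop1 : ∀ (x : σ) (m m' : σ →₀ ℕ), O.lt m' m → S m'.support ⊆ S m.support →
    S (m' + Finsupp.single x 1).support ⊆ S (m + Finsupp.single x 1).support
  prop2 : ∀ (m m' : σ →₀ ℕ), O.lt m' m →
    ((m'.support : Set σ) ⊆ ⋃ p ∈ S m.support, (p.vars : Set σ)) →
    S m'.support ⊆ S m.support
  prop3 : ∀ p ∈ P, ∀ μ : σ →₀ ℕ, IsLeadingMonomial O p μ → p ∈ S μ.support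

namespace AdmissibleOrder

variable {σ : Type*} (O : AdmissibleOrder σ)

instance : IsStrictTotalOrder (σ →₀ ℕ) O.lt where
  trichotomous a b := by rcases O.total a b with h | h | h <;> tauto
  irrefl := O.irrefl
  trans _ _ _ := O.trans

lemma add_lt_add_right {a b : σ →₀ ℕ} (h : O.lt a b) (c : σ →₀ ℕ) : O.lt (a + c) (b + c) := by
  simpa only [add_comm _ c] using O.add_lt c h

lemma lt_add_of_ne_zero (a : σ →₀ ℕ) {b : σ →₀ ℕ} (hb : b ≠ 0) : O.lt a (a + b) := by
  simpa using O.add_lt a (O.zero_lt b hb)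

lemma lt_of_add_lt {a c v : σ →₀ ℕ} (h : O.lt (a + c) v) : O.lt a v := by
  rcases eq_or_ne c 0 with rfl | hc
  · simpa using h
  · exact O.trans (O.lt_add_of_ne_zero a hc) h

lemma exists_isLeadingMonomial {F : Type*} [CommSemiring F] {p : MvPolynomial σ F}
    (hp : p ≠ 0) : ∃ μ, IsLeadingMonomial O p μ := by
  classical
  let := linearOrderOfSTO O.lt
  obtain ⟨μ, hμ, hmax⟩ := p.support.exists_max_image id (MvPolynomial.support_nonempty.2 hp)
  exact ⟨μ, hμ, fun ν hν hne => (show ν = μ ∨ O.lt ν μ from hmax ν hν).resolve_left hne⟩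

end AdmissibleOrder

open MvPolynomial

namespace MvPolynomial

variable {σ F : Type*} [CommSemiring F]

lemma mem_of_forall_monomial_mem (N : Submodule F (MvPolynomial σ F))
    {p : MvPolynomial σ F} (h : ∀ t ∈ p.support, monomial t 1 ∈ N) : p ∈ N := by
  have hp : p ∈ restrictSupport F (p.support : Set (σ →₀ ℕ)) :=
    (mem_restrictSupport_iff F).2 subset_rfl
  rw [restrictSupport_eq_span] at hp
  exact Submodule.span_le.2 (by rintro _ ⟨t, ht, rfl⟩; exact h t ht) hp

lemma one_notMem_span_of_eval_eq_zero [Nontrivial F] {G : Set (MvPolynomial σ F)} {ξ : σ → F}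
    (hξ : ∀ q ∈ G, eval ξ q = 0) : (1 : MvPolynomial σ F) ∉ Ideal.span G := fun h =>
  (one_ne_zero : (1 : F) ≠ 0) (by simpa using (Ideal.span_le (I := RingHom.ker (eval ξ))).2 hξ h)

noncomputable def killOutside (K : Set σ) : MvPolynomial σ F →ₐ[F] MvPolynomial σ F :=
  aeval (K.indicator X)

open Classical in
lemma killOutside_monomial (K : Set σ) (m : σ →₀ ℕ) (c : F) :
    killOutside K (monomial m c) = if ↑m.support ⊆ K then monomial m c else 0 := by
  rw [killOutside, aeval_monomial]
  split_ifs with h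
  · rw [monomial_eq, algebraMap_eq]
    congr 1
    exact Finsupp.prod_congr fun y hy => by rw [Set.indicator_of_mem (h hy)]
  · obtain ⟨y, hy, hyK⟩ := Set.not_subset.1 h
    rw [Finsupp.prod, Finset.prod_eq_zero hy (by
      rw [Set.indicator_of_notMem hyK, zero_pow (Finsupp.mem_support_iff.1 hy)]), mul_zero]

open Classical in
lemma coeff_killOutside (K : Set σ) (p : MvPolynomial σ F) (m : σ →₀ ℕ) :
    (killOutside K p).coeff m = if ↑m.support ⊆ K then p.coeff m else 0 := by
  induction p using MvPolynomial.induction_on' with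
  | monomial u c =>
    rw [killOutside_monomial]
    rcases eq_or_ne u m with rfl | hne
    · split_ifs <;> simp
    · split_ifs <;> simp [coeff_monomial, hne]
  | add p q hp hq =>
    rw [map_add, coeff_add, hp, hq, coeff_add]
    split_ifs <;> simp

lemma killOutside_eq_self {K : Set σ} {q : MvPolynomial σ F} (h : ↑q.vars ⊆ K) :
    killOutside K q = q := by
  classical
  ext m
  rw [coeff_killOutside]
  split_ifs with hm
  · rfl
  · refine (notMem_support_iff.1 fun hmq => hm ?_).symm
    exact (Finset.coe_subset.2 (support_subset_vars_of_mem_support hmq)).trans h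

lemma killOutside_mem_span {K : Set σ} {G : Set (MvPolynomial σ F)}
    (hG : ∀ g ∈ G, ↑g.vars ⊆ K) {q : MvPolynomial σ F} (hq : q ∈ Ideal.span G) :
    killOutside K q ∈ Ideal.span G := by
  have := Ideal.mem_map_of_mem (killOutside K) hq
  rw [Ideal.map_span] at this
  refine Ideal.span_mono ?_ this
  rintro _ ⟨g, hg, rfl⟩
  rwa [killOutside_eq_self (hG g hg)]

end MvPolynomial

lemma eq_zero_of_forall_not_reducible {σ F : Type*} [CommSemiring F] (O : AdmissibleOrder σ)
    {I : Ideal (MvPolynomial σ F)} {f : MvPolynomial σ F} (hf : f ∈ I)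
    (h : ∀ w ∈ f.support, ¬ Reducible O I w) : f = 0 := by
  by_contra hne
  obtain ⟨μ, hμ⟩ := O.exists_isLeadingMonomial hne
  exact h μ hμ.1 ⟨f, hf, hμ⟩

section Support

variable {σ F : Type*} [CommSemiring F] [DecidableEq σ] {O : AdmissibleOrder σ}
  {P : Set (MvPolynomial σ F)} {S : Finset σ → Set (MvPolynomial σ F)}

lemma IsSupport.subset_add (hS : IsSupport O P S) {a b : σ →₀ ℕ} (hab : O.lt a b)
    (h : S a.support ⊆ S b.support) (c : σ →₀ ℕ) :
    S (a + c).support ⊆ S (b + c).support := by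
  induction c using Finsupp.induction_linear generalizing a b with
  | zero => simpa using h
  | add f g hf hg =>
    simpa only [add_assoc] using hg (O.add_lt_add_right hab f) (hf hab h)
  | single x k =>
    induction k with
    | zero => simpa using h
    | succ k ih =>
      rw [Finsupp.single_add, ← add_assoc, ← add_assoc]
      exact hS.prop1 x _ _ (O.add_lt_add_right hab _) ih

/-- The part of `μ` in the variables of `S v` is handled by `prop2`, the remaining variables
already occur in `v` and are added back with `prop1`. -/
lemma IsSupport.subset_of_lt (hS : IsSupport O P S) {μ v : σ →₀ ℕ} (hlt : O.lt μ v)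
    (hvars : ↑μ.support ⊆ (⋃ p ∈ S v.support, (p.vars : Set σ)) ∪ ↑v.support) :
    S μ.support ⊆ S v.support := by
  classical
  set V := ⋃ p ∈ S v.support, (p.vars : Set σ)
  have hμ := Finsupp.filter_add_filter_not μ (· ∈ V)
  set a := μ.filter (· ∈ V)
  set c := μ.filter (· ∉ V)
  have hav : O.lt a v := O.lt_of_add_lt (hμ ▸ hlt)
  have haS : S a.support ⊆ S v.support :=
    hS.prop2 v a hav fun y hy => by
      simp only [a, Finsupp.support_filter, Finset.coe_filter] at hy
      exact hy.2
  have hcv : c.support ⊆ v.support := fun y hy => by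
    simp only [c, Finsupp.support_filter, Finset.mem_filter] at hy
    exact_mod_cast (hvars hy.1).resolve_left hy.2
  have := hS.subset_add hav haS c
  rwa [hμ, Finsupp.support_add_eq_union, Finset.union_eq_left.2 hcv] at this

end Support

section NormalForm

variable {σ F : Type*} [Field F] {O : AdmissibleOrder σ}
  {S : Finset σ → Set (MvPolynomial σ F)}

variable (O S) in
def irreducibleMonomials (Y : Finset σ) : Set (σ →₀ ℕ) :=
  {w | S w.support ⊆ S Y ∧ ¬ Reducible O (Ideal.span (S w.support)) w}

variable (O S) in
def normalMonomials (v : σ →₀ ℕ) : Set (σ →₀ ℕ) :=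
  {w | w = v ∨ O.lt w v} ∩ irreducibleMonomials O S v.support

variable (O S) in
def ReducibleDescends (Y : Finset σ) : Prop :=
  ∀ w : σ →₀ ℕ, S w.support ⊆ S Y →
    Reducible O (Ideal.span (S Y)) w → Reducible O (Ideal.span (S w.support)) w

lemma normalMonomials_subset {μ v : σ →₀ ℕ} (hlt : O.lt μ v) (hsub : S μ.support ⊆ S v.support) :
    normalMonomials O S μ ⊆ normalMonomials O S v := by
  rintro w ⟨hw | hw, hwS, hirr⟩
  · subst hw; exact ⟨Or.inr hlt, hsub, hirr⟩
  · exact ⟨Or.inr (O.trans hw hlt), hwS.trans hsub, hirr⟩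

lemma eq_zero_of_mem_span_of_mem_restrictSupport {Y : Finset σ} (hred : ReducibleDescends O S Y)
    {f : MvPolynomial σ F} (hf : f ∈ Ideal.span (S Y))
    (hirr : f ∈ restrictSupport F (irreducibleMonomials O S Y)) : f = 0 :=
  eq_zero_of_forall_not_reducible O hf fun w hw hw' =>
    ((mem_restrictSupport_iff F).1 hirr hw).2 (hred w ((mem_restrictSupport_iff F).1 hirr hw).1 hw')

variable [DecidableEq σ] {P : Set (MvPolynomial σ F)}

/-- Killing the variables outside `S v` and `v` keeps `v` as leading monomial and pushes every
other monomial under `S v` by `IsSupport.subset_of_lt`. -/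
lemma IsSupport.exists_reducer (hS : IsSupport O P S) {v : σ →₀ ℕ}
    (hv : Reducible O (Ideal.span (S v.support)) v) :
    ∃ g ∈ Ideal.span (S v.support), g.coeff v = 1 ∧
      ∀ μ ∈ g.support, μ ≠ v → O.lt μ v ∧ S μ.support ⊆ S v.support := by
  obtain ⟨g, hg, hgv, hlt⟩ := hv
  set K := (⋃ p ∈ S v.support, (p.vars : Set σ)) ∪ ↑v.support
  have hvK : ↑v.support ⊆ K := Set.subset_union_right
  have hgK : killOutside K g ∈ Ideal.span (S v.support) :=
    killOutside_mem_span (fun p hp =>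
      (Set.subset_biUnion_of_mem (u := fun p => (p.vars : Set σ)) hp).trans
        Set.subset_union_left) hg
  refine ⟨(g.coeff v)⁻¹ • killOutside K g, Submodule.smul_of_tower_mem _ _ hgK, ?_, ?_⟩
  · rw [coeff_smul, coeff_killOutside, if_pos hvK, smul_eq_mul,
      inv_mul_cancel₀ (mem_support_iff.1 hgv)]
  · intro μ hμ hne
    have hμ' := mem_support_iff.1 (support_smul hμ)
    rw [coeff_killOutside] at hμ'
    split_ifs at hμ' with hμK
    · have hlt' := hlt μ (mem_support_iff.2 hμ') hne
      exact ⟨hlt', hS.subset_of_lt hlt' hμK⟩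
    · exact absurd rfl hμ'

lemma IsSupport.monomial_mem_restrictSupport_sup_span (hS : IsSupport O P S) (v : σ →₀ ℕ) :
    monomial v (1 : F) ∈ restrictSupport F (normalMonomials O S v) ⊔
      (Ideal.span (S v.support)).restrictScalars F := by
  induction v using O.wf.induction with
  | _ v ih =>
  set N := restrictSupport F (normalMonomials O S v) ⊔
    (Ideal.span (S v.support)).restrictScalars F
  by_cases hv : Reducible O (Ideal.span (S v.support)) v
  · obtain ⟨g, hg, hgv, htail⟩ := hS.exists_reducer hv
    have htailN : monomial v 1 - g ∈ N := by
      refine mem_of_forall_monomial_mem _ fun μ hμ => ?_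
      have hμ' := mem_support_iff.1 hμ
      rw [coeff_sub, coeff_monomial] at hμ'
      split_ifs at hμ' with hvμ
      · exact absurd (by rw [← hvμ, hgv, sub_self]) hμ'
      obtain ⟨hlt, hsub⟩ := htail μ (mem_support_iff.2 (by simpa using hμ')) (Ne.symm hvμ)
      exact sup_le_sup (restrictSupport_mono F (normalMonomials_subset hlt hsub))
        (Submodule.restrictScalars_mono F (Ideal.span_mono hsub)) (ih μ hlt)
    simpa using Submodule.add_mem _ (Submodule.mem_sup_right
      (show g ∈ (Ideal.span (S v.support)).restrictScalars F from hg)) htailN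
  · exact Submodule.mem_sup_left <| (monomial_mem_restrictSupport F).2 <|
      Or.inl ⟨Or.inl rfl, subset_rfl, hv⟩

noncomputable def IsSupport.normalForm (hS : IsSupport O P S) (v : σ →₀ ℕ) :
    MvPolynomial σ F :=
  Classical.choose (Submodule.mem_sup.1 (hS.monomial_mem_restrictSupport_sup_span v))

lemma IsSupport.normalForm_spec (hS : IsSupport O P S) (v : σ →₀ ℕ) :
    monomial v 1 - hS.normalForm v ∈ Ideal.span (S v.support) ∧
      hS.normalForm v ∈ restrictSupport F (normalMonomials O S v) := by
  obtain ⟨hr, y, hy, hsum⟩ :=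
    Classical.choose_spec (Submodule.mem_sup.1 (hS.monomial_mem_restrictSupport_sup_span v))
  have hsum' : hS.normalForm v + y = monomial v 1 := hsum
  exact ⟨by rwa [← hsum', add_sub_cancel_left], hr⟩

noncomputable def IsSupport.reduce (hS : IsSupport O P S) :
    MvPolynomial σ F →ₗ[F] MvPolynomial σ F :=
  (basisMonomials σ F).constr F hS.normalForm

lemma IsSupport.reduce_monomial (hS : IsSupport O P S) (v : σ →₀ ℕ) :
    hS.reduce (monomial v 1) = hS.normalForm v := by
  simpa [IsSupport.reduce] using (basisMonomials σ F).constr_basis F hS.normalForm v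

lemma IsSupport.sub_reduce_mem_span (hS : IsSupport O P S) {Y : Finset σ}
    {p : MvPolynomial σ F} (hp : ∀ t ∈ p.support, S t.support ⊆ S Y) :
    p - hS.reduce p ∈ Ideal.span (S Y) := by
  refine mem_of_forall_monomial_mem
    (((Ideal.span (S Y)).restrictScalars F).comap (LinearMap.id - hS.reduce)) fun t ht => ?_
  simpa [hS.reduce_monomial] using Ideal.span_mono (hp t ht) (hS.normalForm_spec t).1

lemma IsSupport.reduce_mem_restrictSupport (hS : IsSupport O P S) {Y : Finset σ}
    {p : MvPolynomial σ F} (hp : ∀ t ∈ p.support, S t.support ⊆ S Y) :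
    hS.reduce p ∈ restrictSupport F (irreducibleMonomials O S Y) := by
  refine mem_of_forall_monomial_mem
    ((restrictSupport F (irreducibleMonomials O S Y)).comap hS.reduce) fun t ht => ?_
  rw [Submodule.mem_comap, hS.reduce_monomial]
  refine restrictSupport_mono F ?_ (hS.normalForm_spec t).2
  rintro w ⟨-, hwS, hirr⟩
  exact ⟨hwS.trans (hp t ht), hirr⟩

lemma IsSupport.reduce_eq_zero_of_mem (hS : IsSupport O P S) {D : ℕ}
    (hred : ∀ m : σ →₀ ℕ, monDeg m ≤ D → ReducibleDescends O S m.support)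
    {p : MvPolynomial σ F} (hp : p ∈ P) (hpD : p.totalDegree ≤ D) : hS.reduce p = 0 := by
  obtain rfl | hne := eq_or_ne p 0
  · exact map_zero _
  obtain ⟨μ, hμ⟩ := O.exists_isLeadingMonomial hne
  have hpS := hS.prop3 p hp μ hμ
  have hsub : ∀ t ∈ p.support, S t.support ⊆ S μ.support := fun t ht => by
    obtain rfl | htμ := eq_or_ne t μ
    · exact subset_rfl
    refine hS.prop2 μ t (hμ.2 t ht htμ) fun y hy => Set.mem_biUnion hpS ?_
    exact (mem_vars_iff_mem_support y).2 ⟨t, ht, hy⟩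
  refine eq_zero_of_mem_span_of_mem_restrictSupport (hred μ ((le_totalDegree hμ.1).trans hpD))
    ?_ (hS.reduce_mem_restrictSupport hsub)
  simpa using Submodule.sub_mem _ (Ideal.subset_span hpS) (hS.sub_reduce_mem_span hsub)

/-- Both sides are congruent to `x * t` modulo `⟨S (x * t)⟩` and are supported on monomials that
are irreducible modulo it. -/
lemma IsSupport.reduce_X_mul_normalForm (hS : IsSupport O P S) (x : σ) (t : σ →₀ ℕ)
    (hred : ReducibleDescends O S (Finsupp.single x 1 + t).support) :
    hS.reduce (X x * hS.normalForm t) = hS.normalForm (Finsupp.single x 1 + t) := by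
  set xt := Finsupp.single x 1 + t
  obtain ⟨hmem_t, hnf_t⟩ := hS.normalForm_spec t
  obtain ⟨hmem_xt, hnf_xt⟩ := hS.normalForm_spec xt
  have hX : X x * monomial t (1 : F) = monomial xt 1 := by
    rw [monomial_single_add, pow_one]
  have hSt : S t.support ⊆ S xt.support := by
    refine hS.subset_of_lt ?_ fun y hy => Or.inr ?_
    · simpa [xt, add_comm] using O.lt_add_of_ne_zero t (Finsupp.single_ne_zero.2 one_ne_zero)
    · exact_mod_cast Finsupp.support_mono le_add_self hy
  have hsupp : ∀ s ∈ (X x * hS.normalForm t).support, S s.support ⊆ S xt.support := by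
    rw [support_X_mul]
    intro s hs
    obtain ⟨t', ht', rfl⟩ := Finset.mem_map.1 hs
    obtain ⟨ht't | ht't, ht'S, -⟩ := (mem_restrictSupport_iff F).1 hnf_t ht'
    · rw [ht't]; exact subset_rfl
    · simpa only [xt, addLeftEmbedding_apply, add_comm (Finsupp.single x 1)]
        using hS.prop1 x t t' ht't ht'S
  refine sub_eq_zero.1 (eq_zero_of_mem_span_of_mem_restrictSupport hred ?_ ?_)
  · have hXt : X x * (monomial t 1 - hS.normalForm t) ∈ Ideal.span (S xt.support) :=
      Ideal.mul_mem_left _ _ (Ideal.span_mono hSt hmem_t)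
    have := Submodule.sub_mem _ (Submodule.sub_mem _ hmem_xt (hS.sub_reduce_mem_span hsupp)) hXt
    rw [mul_sub, hX] at this
    convert this using 1
    abel
  · refine Submodule.sub_mem _ (hS.reduce_mem_restrictSupport hsupp) ?_
    exact restrictSupport_mono F (fun w hw => hw.2) hnf_xt

lemma IsSupport.reduce_X_mul_eq_zero (hS : IsSupport O P S) {D : ℕ}
    (hred : ∀ m : σ →₀ ℕ, monDeg m ≤ D → ReducibleDescends O S m.support) (x : σ)
    {q : MvPolynomial σ F} (hq : hS.reduce q = 0) (hdeg : (X x * q).totalDegree ≤ D) :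
    hS.reduce (X x * q) = 0 := by
  set Φ := hS.reduce ∘ₗ LinearMap.mulLeft F (X x)
  have : q ∈ LinearMap.ker (Φ - Φ ∘ₗ hS.reduce) := mem_of_forall_monomial_mem _ fun t ht => by
    have htD : monDeg (Finsupp.single x 1 + t) ≤ D := by
      refine (le_totalDegree ?_).trans hdeg
      rw [support_X_mul]
      exact Finset.mem_map_of_mem _ ht
    have hX : X x * monomial t (1 : F) = monomial (Finsupp.single x 1 + t) 1 := by
      rw [monomial_single_add, pow_one]
    simp [Φ, hS.reduce_monomial, hS.reduce_X_mul_normalForm x t (hred _ htD), hX]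
  simpa [Φ, hq, sub_eq_zero] using this

lemma IsSupport.reduce_one_ne_zero (hS : IsSupport O P S) {ξ : σ → F}
    (hξ : ∀ q ∈ S (0 : σ →₀ ℕ).support, eval ξ q = 0) : hS.reduce 1 ≠ 0 := by
  intro h
  have := (hS.normalForm_spec 0).1
  rw [← hS.reduce_monomial, monomial_zero', C_1, h, sub_zero] at this
  exact one_notMem_span_of_eval_eq_zero hξ this

end NormalForm

lemma IsPCDerivation.forall_mem {σ F : Type*} [CommSemiring F] {P : Set (MvPolynomial σ F)}
    {π : List (MvPolynomial σ F)} (hπ : IsPCDerivation P π) (N : Submodule F (MvPolynomial σ F))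
    (hP : P ⊆ N) (hX : ∀ x q, q ∈ N → X x * q ∈ π → X x * q ∈ N) : ∀ p ∈ π, p ∈ N := by
  suffices h : ∀ i (hi : i < π.length), π[i] ∈ N by
    intro p hp
    obtain ⟨i, hi, rfl⟩ := List.getElem_of_mem hp
    exact h i hi
  intro i
  induction i using Nat.strong_induction_on with
  | _ i ih =>
    intro hi
    rcases hπ i hi with hax | ⟨j, j', hj, hj', a, b, heq⟩ | ⟨j, hj, x, heq⟩
    · exact hP hax
    · rw [heq]
      exact N.add_mem (N.smul_mem a (ih j hj _)) (N.smul_mem b (ih j' hj' _))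
    · rw [heq]
      exact hX x _ (ih j hj _) (heq ▸ List.getElem_mem hi)

theorem stmt_8_general {F : Type*} [Field F] {n : ℕ} (O : AdmissibleOrder (Fin n))
    (D : ℕ)
    (P : Set (MvPolynomial (Fin n) F)) (hPdeg : ∀ p ∈ P, p.totalDegree ≤ D)
    (S : Finset (Fin n) → Set (MvPolynomial (Fin n) F)) (hS : IsSupport O P S)
    (hsat : ∀ m : Fin n →₀ ℕ, monDeg m ≤ D →
      ∃ ξ : Fin n → F, ∀ q ∈ S m.support, MvPolynomial.eval ξ q = 0)
    (hred : ∀ m : Fin n →₀ ℕ, monDeg m ≤ D → ∀ m' : Fin n →₀ ℕ,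
      S m'.support ⊆ S m.support →
      (Reducible O (Ideal.span (S m'.support)) m' ↔
        Reducible O (Ideal.span (S m.support)) m')) :
    ∀ π : List (MvPolynomial (Fin n) F), IsPCRefutation P π →
      ∃ p ∈ π, D < p.totalDegree := by
  rintro π ⟨hπ, hlast⟩
  by_contra! hdeg
  have hdesc : ∀ m, monDeg m ≤ D → ReducibleDescends O S m.support :=
    fun m hm w hw => (hred m hm w hw).2
  have hker : ∀ p ∈ π, p ∈ LinearMap.ker hS.reduce :=
    hπ.forall_mem _ (fun p hp => hS.reduce_eq_zero_of_mem hdesc hp (hPdeg p hp))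
      (fun x q hq hxq => hS.reduce_X_mul_eq_zero hdesc x hq (hdeg _ hxq))
  obtain ⟨ξ, hξ⟩ := hsat 0 (by simp [monDeg])
  exact hS.reduce_one_ne_zero hξ (hker 1 (List.mem_of_getLast? hlast))

/-- if a `P`-support `S` satisfies the satisfiability condition and the
reducibility condition for all monomials of degree at most `D`, then every polynomial
calculus refutation of `P` has degree strictly greater than `D`. -/
theorem stmt_8 {F : Type*} [Field F] {n : ℕ} (O : AdmissibleOrder (Fin n))
    (D : ℕ) (hD : 0 < D)
    (P : Set (MvPolynomial (Fin n) F)) (hPdeg : ∀ p ∈ P, p.totalDegree ≤ D)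
    (S : Finset (Fin n) → Set (MvPolynomial (Fin n) F)) (hS : IsSupport O P S)
    (hsat : ∀ m : Fin n →₀ ℕ, monDeg m ≤ D →
      ∃ ξ : Fin n → F, ∀ q ∈ S m.support, MvPolynomial.eval ξ q = 0)
    (hred : ∀ m : Fin n →₀ ℕ, monDeg m ≤ D → ∀ m' : Fin n →₀ ℕ,
      S m'.support ⊆ S m.support →
      (Reducible O (Ideal.span (S m'.support)) m' ↔
        Reducible O (Ideal.span (S m.support)) m')) :
    ∀ π : List (MvPolynomial (Fin n) F), IsPCRefutation P π →
      ∃ p ∈ π, D < p.totalDegree :=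
  stmt_8_general O D P hPdeg S hS hsat hred
end

section
/- Let F be a field, fix an admissible order ≺ on the monomials of F[x₁,…,xₙ], let 𝒫 be a set of polynomials and let S be a 𝒫-support. Then for all monomials m and m′ such that vars(m′) ⊆ vars(m), it holds that S(m′) ⊆ S(m). -/
section Aux
variable {σ : Type*} [DecidableEq σ]

/-- indicator monomial of a finset of variables -/
noncomputable def indMon (Y : Finset σ) : σ →₀ ℕ := ∑ x ∈ Y, Finsupp.single x 1

lemma indMon_support (Y : Finset σ) : (indMon Y).support = Y := by
  classical
  rw [indMon, Finsupp.support_sum_eq_biUnion]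
  · simp [Finsupp.support_single_ne_zero _ one_ne_zero]
  · intro i j hij
    simp [Finsupp.support_single_ne_zero, Finset.disjoint_left, hij]

lemma indMon_ne_zero {Y : Finset σ} (h : Y ≠ ∅) : indMon Y ≠ 0 := by
  intro h0
  apply h
  have := indMon_support Y
  rw [h0] at this
  simpa using this.symm

lemma indMon_union {A B : Finset σ} (h : Disjoint A B) :
    indMon (A ∪ B) = indMon A + indMon B := by
  rw [indMon, Finset.sum_union h]; rfl

lemma indMon_lt (O : AdmissibleOrder σ) {A B : Finset σ} (h : A ⊂ B) :
    O.lt (indMon A) (indMon B) := by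
  have h1 : A ∪ (B \ A) = B := Finset.union_sdiff_of_subset h.subset
  have hd : Disjoint A (B \ A) := Finset.disjoint_sdiff
  have hne : indMon (B \ A) ≠ 0 := by
    apply indMon_ne_zero
    intro hemp
    exact h.not_subset (fun x hx => by
      by_contra hxa
      exact absurd (Finset.mem_sdiff.mpr ⟨hx, hxa⟩) (by simp [hemp]))
  have hlt := O.add_lt (indMon A) (O.zero_lt _ hne)
  rw [add_zero] at hlt
  rwa [← indMon_union hd, h1] at hlt

lemma indMon_insert {a : σ} {s : Finset σ} (ha : a ∉ s) :
    indMon (insert a s) = indMon s + Finsupp.single a 1 := by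
  rw [indMon, Finset.sum_insert ha, add_comm]; rfl
end Aux

lemma support_key {F : Type*} [Field F] {n : ℕ} (O : AdmissibleOrder (Fin n))
    (P : Set (MvPolynomial (Fin n) F))
    (S : Finset (Fin n) → Set (MvPolynomial (Fin n) F)) (hS : IsSupport O P S) :
    ∀ (Y' Y : Finset (Fin n)), Y' ⊆ Y → S Y' ⊆ S Y := by
  intro Y'
  induction Y' using Finset.induction_on with
  | empty =>
    intro Y hY
    rcases eq_or_ne Y ∅ with rfl | hne
    · exact subset_rfl
    · have h2 := hS.prop2 (indMon Y) 0 (O.zero_lt _ (indMon_ne_zero hne)) (by simp)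
      simpa [indMon_support] using h2
  | @insert a s ha ih =>
    intro Y hY
    have haY : a ∈ Y := hY (Finset.mem_insert_self a s)
    have hs : s ⊆ Y.erase a := fun x hx =>
      Finset.mem_erase.mpr ⟨fun hxa => ha (hxa ▸ hx), hY (Finset.mem_insert_of_mem hx)⟩
    rcases eq_or_ne s (Y.erase a) with heq | hne
    · rw [heq, Finset.insert_erase haY]
    · have hss : s ⊂ Y.erase a := Finset.ssubset_iff_subset_ne.mpr ⟨hs, hne⟩
      have hIH : S (indMon s).support ⊆ S (indMon (Y.erase a)).support := by
        rw [indMon_support, indMon_support]; exact ih _ hs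
      have hp := hS.prop1 a (indMon (Y.erase a)) (indMon s) (indMon_lt O hss) hIH
      rw [← indMon_insert ha, ← indMon_insert (Finset.notMem_erase a Y),
        indMon_support, indMon_support, Finset.insert_erase haY] at hp
      exact hp

/-- for a `P`-support `S` and monomials with `vars(m') ⊆ vars(m)`,
it holds that `S(m') ⊆ S(m)`. -/
theorem stmt_10 {F : Type*} [Field F] {n : ℕ} (O : AdmissibleOrder (Fin n))
    (P : Set (MvPolynomial (Fin n) F))
    (S : Finset (Fin n) → Set (MvPolynomial (Fin n) F)) (hS : IsSupport O P S)
    (m m' : Fin n →₀ ℕ) (h : m'.support ⊆ m.support) :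
    S m'.support ⊆ S m.support := by
  exact support_key O P S hS m'.support m.support h
end

section
/- Let F be a field, fix an admissible order ≺ on the monomials of F[x₁,…,xₙ], let 𝒫 be a set of polynomials, let S be a 𝒫-support, and let 𝒬 ⊆ 𝒫. Suppose that every monomial m that is irreducible modulo the ideal generated by S(m) and satisfies S(m) ⊆ 𝒬 is also irreducible modulo the ideal generated by 𝒬. Then for every monomial m′ with S(m′) ⊆ 𝒬, the reduction of m′ modulo the ideal generated by 𝒬 equals the reduction of m′ modulo the ideal generated by S(m′): R_{⟨𝒬⟩}(m′) = R_{⟨S(m′)⟩}(m′). -/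
/-- `r` is the reduction of `P` modulo `I`: `P - r ∈ I` and every monomial of `r`
is irreducible modulo `I`. -/
def IsReduction {σ F : Type*} [CommRing F] (O : AdmissibleOrder σ)
    (I : Ideal (MvPolynomial σ F)) (P r : MvPolynomial σ F) : Prop :=
  P - r ∈ I ∧ ∀ μ ∈ r.support, ¬ Reducible O I μ


section AuxProof

open MvPolynomial

variable {σ F : Type*}

private lemma adm_finset_max (O : AdmissibleOrder σ) (s : Finset (σ →₀ ℕ))
    (hs : s.Nonempty) : ∃ μ ∈ s, ∀ ν ∈ s, ν ≠ μ → O.lt ν μ := by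
  classical
  induction s using Finset.induction_on with
  | empty => exact absurd hs (by simp)
  | @insert a t _ ih =>
    rcases t.eq_empty_or_nonempty with rfl | ht
    · exact ⟨a, by simp, by simp⟩
    · obtain ⟨μ, hμt, hμ⟩ := ih ht
      rcases O.total a μ with heq | hlt | hlt
      · refine ⟨μ, Finset.mem_insert_of_mem hμt, fun ν hν hne => ?_⟩
        rcases Finset.mem_insert.1 hν with rfl | hν
        · exact absurd heq hne
        · exact hμ ν hν hne
      · refine ⟨μ, Finset.mem_insert_of_mem hμt, fun ν hν hne => ?_⟩
        rcases Finset.mem_insert.1 hν with rfl | hν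
        · exact hlt
        · exact hμ ν hν hne
      · refine ⟨a, Finset.mem_insert_self a t, fun ν hν hne => ?_⟩
        rcases Finset.mem_insert.1 hν with rfl | hν
        · exact absurd rfl hne
        · rcases O.total ν μ with rfl | h2 | h2
          · exact hlt
          · exact O.trans h2 hlt
          · exfalso
            have h3 : ν ≠ μ := by rintro rfl; exact O.irrefl ν h2
            exact O.irrefl μ (O.trans h2 (hμ ν hν h3))

private lemma adm_exists_lm [CommSemiring F] (O : AdmissibleOrder σ)
    {p : MvPolynomial σ F} (hp : p ≠ 0) : ∃ μ, IsLeadingMonomial O p μ := by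
  obtain ⟨μ, h1, h2⟩ := adm_finset_max O p.support (support_nonempty.mpr hp)
  exact ⟨μ, h1, h2⟩

private lemma reduction_unique [CommRing F] (O : AdmissibleOrder σ)
    {I : Ideal (MvPolynomial σ F)} {P r₁ r₂ : MvPolynomial σ F}
    (h1 : IsReduction O I P r₁) (h2 : IsReduction O I P r₂) : r₁ = r₂ := by
  by_contra hne
  have hd : r₁ - r₂ ≠ 0 := sub_ne_zero.mpr hne
  have hmem : r₁ - r₂ ∈ I := by
    have := I.sub_mem h2.1 h1.1
    have he : (P - r₂) - (P - r₁) = r₁ - r₂ := by ring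
    rwa [he] at this
  obtain ⟨μ, hμ⟩ := adm_exists_lm O hd
  have hred : Reducible O I μ := ⟨r₁ - r₂, hmem, hμ⟩
  have hsup := hμ.1
  rw [mem_support_iff, coeff_sub] at hsup
  by_cases hc : coeff μ r₁ = 0
  · exact h2.2 μ (mem_support_iff.mpr (by
      intro h0; apply hsup; rw [hc, h0]; ring)) hred
  · exact h1.2 μ (mem_support_iff.mpr hc) hred

private noncomputable def projGood [CommRing F] (good : Set σ)
    [DecidablePred (· ∈ good)] : MvPolynomial σ F →ₐ[F] MvPolynomial σ F :=
  aeval fun i => if i ∈ good then X i else 0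

open Classical in
private lemma projGood_monomial [CommRing F] (good : Set σ) [DecidablePred (· ∈ good)]
    (d : σ →₀ ℕ) (c : F) :
    projGood good (monomial d c) =
      if (↑d.support : Set σ) ⊆ good then monomial d c else 0 := by
  rw [projGood, aeval_monomial]
  by_cases h : (↑d.support : Set σ) ⊆ good
  · rw [if_pos h, monomial_eq]
    congr 1
    apply Finsupp.prod_congr
    intro i hi
    rw [if_pos (h (by simpa using hi))]
  · rw [if_neg h]
    rw [Set.not_subset] at h
    obtain ⟨i, hi, hig⟩ := h
    have hi' : i ∈ d.support := by simpa using hi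
    rw [Finsupp.prod, Finset.prod_eq_zero hi']
    · ring
    · rw [if_neg hig, zero_pow (by simpa using hi')]

open Classical in
private lemma coeff_projGood [CommRing F] (good : Set σ) [DecidablePred (· ∈ good)]
    (p : MvPolynomial σ F) (μ : σ →₀ ℕ) :
    coeff μ (projGood good p) =
      if (↑μ.support : Set σ) ⊆ good then coeff μ p else 0 := by
  nth_rewrite 1 [p.as_sum]
  rw [map_sum, coeff_sum]
  by_cases hm : μ ∈ p.support
  · rw [Finset.sum_eq_single_of_mem μ hm]
    · rw [projGood_monomial]
      split_ifs <;> simp [coeff_monomial]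
    · intro v _ hvne
      rw [projGood_monomial]
      split_ifs <;> simp [coeff_monomial, hvne]
  · have hz : coeff μ p = 0 := by rwa [mem_support_iff, not_not] at hm
    rw [Finset.sum_eq_zero, hz]
    · simp
    · intro v hv
      have hvne : v ≠ μ := fun he => hm (he ▸ hv)
      rw [projGood_monomial]
      split_ifs <;> simp [coeff_monomial, hvne]

private lemma projGood_eq_self [CommRing F] (good : Set σ) [DecidablePred (· ∈ good)]
    {p : MvPolynomial σ F} (h : ∀ μ ∈ p.support, (↑μ.support : Set σ) ⊆ good) :
    projGood good p = p := by
  ext μ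
  rw [coeff_projGood]
  split_ifs with hc
  · rfl
  · rcases eq_or_ne (coeff μ p) 0 with h0 | h0
    · exact h0.symm
    · exact absurd (h μ (mem_support_iff.mpr h0)) hc

private lemma projGood_mem_span [CommRing F] (good : Set σ) [DecidablePred (· ∈ good)]
    {T : Set (MvPolynomial σ F)}
    (hT : ∀ s ∈ T, ∀ μ ∈ s.support, (↑μ.support : Set σ) ⊆ good)
    {g : MvPolynomial σ F} (hg : g ∈ Ideal.span T) :
    projGood good g ∈ Ideal.span T := by
  have h1 : projGood good g ∈ Ideal.map (projGood (F := F) good).toRingHom (Ideal.span T) :=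
    Ideal.mem_map_of_mem _ hg
  rw [Ideal.map_span] at h1
  refine Ideal.span_le.mpr ?_ h1
  rintro x ⟨s, hs, rfl⟩
  have he : (projGood (F := F) good).toRingHom s = s := projGood_eq_self good (hT s hs)
  rw [he]
  exact Ideal.subset_span hs

private lemma support_add_nat [DecidableEq σ] (a b : σ →₀ ℕ) :
    (a + b).support = a.support ∪ b.support := by
  ext i
  simp only [Finsupp.mem_support_iff, Finsupp.add_apply, Finset.mem_union]
  omega

open Classical in
private lemma claim_S {n : ℕ} [Field F] (O : AdmissibleOrder (Fin n))
    {P : Set (MvPolynomial (Fin n) F)} {S : Finset (Fin n) → Set (MvPolynomial (Fin n) F)}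
    (hS : IsSupport O P S) (m' : Fin n →₀ ℕ) :
    ∀ k : ℕ, ∀ μ : Fin n →₀ ℕ, O.lt μ m' →
      ((↑μ.support : Set (Fin n)) ⊆
        ↑m'.support ∪ ⋃ p ∈ S m'.support, (p.vars : Set (Fin n))) →
      (μ.support.filter
        (fun x => x ∉ ⋃ p ∈ S m'.support, (p.vars : Set (Fin n)))).card = k →
      S μ.support ⊆ S m'.support := by
  intro k
  induction k with
  | zero =>
    intro μ hlt hsub hcard
    apply hS.prop2 m' μ hlt
    intro x hx
    have hx' : x ∈ μ.support := by simpa using hx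
    by_contra hxV
    have hxf : x ∈ μ.support.filter
        (fun x => x ∉ ⋃ p ∈ S m'.support, (p.vars : Set (Fin n))) :=
      Finset.mem_filter.mpr ⟨hx', hxV⟩
    rw [Finset.card_eq_zero] at hcard
    rw [hcard] at hxf
    exact absurd hxf (Finset.notMem_empty x)
  | succ k ih =>
    intro μ hlt hsub hcard
    have hne : (μ.support.filter
        (fun x => x ∉ ⋃ p ∈ S m'.support, (p.vars : Set (Fin n)))).Nonempty :=
      Finset.card_pos.mp (by omega)
    obtain ⟨x, hxf⟩ := hne
    obtain ⟨hxμ, hxV⟩ := Finset.mem_filter.mp hxf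
    have hxm' : x ∈ m'.support := by
      rcases hsub (show (x : Fin n) ∈ (↑μ.support : Set (Fin n)) by simpa using hxμ) with hh | hh
      · simpa using hh
      · exact absurd hh hxV
    set ν := μ.erase x with hν
    have hsupν : ν.support = μ.support.erase x := Finsupp.support_erase
    have hμν : ν + Finsupp.single x (μ x) = μ := Finsupp.erase_add_single x μ
    have hltν : O.lt ν μ := by
      have h0 : Finsupp.single x (μ x) ≠ (0 : Fin n →₀ ℕ) := by
        intro he
        have := Finsupp.single_eq_zero.mp he
        exact Finsupp.mem_support_iff.mp hxμ this
      have h1 := O.add_lt ν (O.zero_lt _ h0)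
      rwa [add_zero, hμν] at h1
    have hltν' : O.lt ν m' := O.trans hltν hlt
    have hsubν : (↑ν.support : Set (Fin n)) ⊆
        ↑m'.support ∪ ⋃ p ∈ S m'.support, (p.vars : Set (Fin n)) := by
      intro y hy
      apply hsub
      rw [hsupν] at hy
      simp only [Finset.coe_erase, Set.mem_diff] at hy
      simpa using hy.1
    have hcardν : (ν.support.filter
        (fun x => x ∉ ⋃ p ∈ S m'.support, (p.vars : Set (Fin n)))).card = k := by
      rw [hsupν, Finset.filter_erase, Finset.card_erase_of_mem hxf]
      omega
    have hSν := ih ν hltν' hsubν hcardν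
    have hp1 := hS.prop1 x m' ν hltν' hSν
    have e1 : (ν + Finsupp.single x 1).support = μ.support := by
      rw [support_add_nat, hsupν, Finsupp.support_single_ne_zero x one_ne_zero]
      ext y
      simp only [Finset.mem_union, Finset.mem_erase, Finset.mem_singleton]
      constructor
      · rintro (⟨_, hy⟩ | rfl)
        · exact hy
        · exact hxμ
      · intro hy
        by_cases hyx : y = x
        · exact Or.inr hyx
        · exact Or.inl ⟨hyx, hy⟩
    have e2 : (m' + Finsupp.single x 1).support = m'.support := by
      rw [support_add_nat, Finsupp.support_single_ne_zero x one_ne_zero]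
      ext y
      simp only [Finset.mem_union, Finset.mem_singleton]
      constructor
      · rintro (hy | rfl)
        · exact hy
        · exact hxm'
      · exact Or.inl
    rwa [e1, e2] at hp1

end AuxProof

/-- let `Q ⊆ P` and suppose every monomial `m` irreducible modulo
`⟨S(m)⟩` with `S(m) ⊆ Q` is also irreducible modulo `⟨Q⟩`. Then for every monomial
`m'` with `S(m') ⊆ Q`, the reduction of `m'` modulo `⟨S(m')⟩` is also its reduction
modulo `⟨Q⟩`, i.e. `R_{⟨Q⟩}(m') = R_{⟨S(m')⟩}(m')`. -/
theorem stmt_12 {F : Type*} [Field F] {n : ℕ} (O : AdmissibleOrder (Fin n))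
    (P : Set (MvPolynomial (Fin n) F))
    (S : Finset (Fin n) → Set (MvPolynomial (Fin n) F)) (hS : IsSupport O P S)
    (Q : Set (MvPolynomial (Fin n) F)) (hQP : Q ⊆ P)
    (h : ∀ m : Fin n →₀ ℕ, ¬ Reducible O (Ideal.span (S m.support)) m →
      S m.support ⊆ Q → ¬ Reducible O (Ideal.span Q) m) :
    ∀ m' : Fin n →₀ ℕ, S m'.support ⊆ Q →
      ∀ r : MvPolynomial (Fin n) F,
        IsReduction O (Ideal.span (S m'.support)) (MvPolynomial.monomial m' 1) r →
        IsReduction O (Ideal.span Q) (MvPolynomial.monomial m' 1) r := by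
  classical
  intro m' hQ r hr
  have hIQ : Ideal.span (S m'.support) ≤ Ideal.span Q := Ideal.span_mono hQ
  constructor
  · exact hIQ hr.1
  · set Vset : Set (Fin n) := ⋃ p ∈ S m'.support, (p.vars : Set (Fin n)) with hVset
    set good : Set (Fin n) := ↑m'.support ∪ Vset with hgood
    have hφmon : projGood good ((MvPolynomial.monomial m') (1 : F)) =
        MvPolynomial.monomial m' 1 := by
      rw [projGood_monomial, if_pos]
      intro x hx
      exact Set.mem_union_left _ hx
    have hT : ∀ s ∈ S m'.support, ∀ μ ∈ s.support,
        (↑μ.support : Set (Fin n)) ⊆ good := by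
      intro s hs μ hμ x hx
      refine Set.mem_union_right _ ?_
      rw [hVset]
      refine Set.mem_iUnion.mpr ⟨s, Set.mem_iUnion.mpr ⟨hs, ?_⟩⟩
      have hx' : x ∈ μ.support := by simpa using hx
      exact Finset.mem_coe.mpr (MvPolynomial.mem_vars x |>.mpr ⟨μ, hμ, hx'⟩)
    have hφr_red : IsReduction O (Ideal.span (S m'.support))
        (MvPolynomial.monomial m' 1) (projGood good r) := by
      constructor
      · have he : MvPolynomial.monomial m' 1 - projGood good r =
            projGood good (MvPolynomial.monomial m' 1 - r) := by
          rw [map_sub, hφmon]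
        rw [he]
        exact projGood_mem_span good hT hr.1
      · intro μ hμ
        apply hr.2 μ
        rw [MvPolynomial.mem_support_iff] at hμ ⊢
        rw [coeff_projGood] at hμ
        intro h0
        apply hμ
        split_ifs
        · exact h0
        · rfl
    have hrr : r = projGood good r := reduction_unique O hr hφr_red
    have hvars : ∀ μ ∈ r.support, (↑μ.support : Set (Fin n)) ⊆ good := by
      intro μ hμ
      rw [hrr, MvPolynomial.mem_support_iff, coeff_projGood] at hμ
      by_contra hc
      rw [if_neg hc] at hμ
      exact hμ rfl
    have hlt : ∀ μ ∈ r.support, μ ≠ m' → O.lt μ m' := by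
      intro μ hμ hne
      set g := MvPolynomial.monomial m' (1 : F) - r with hg
      have hgmem : g ∈ Ideal.span (S m'.support) := hr.1
      have hgne : g ≠ 0 := by
        intro h0
        have hr0 : r = MvPolynomial.monomial m' 1 := by
          have := sub_eq_zero.mp h0
          exact this.symm
        rw [hr0, MvPolynomial.support_monomial, if_neg one_ne_zero] at hμ
        exact hne (Finset.mem_singleton.mp hμ)
      obtain ⟨μ₀, hμ₀⟩ := adm_exists_lm O hgne
      have hred0 : Reducible O (Ideal.span (S m'.support)) μ₀ := ⟨g, hgmem, hμ₀⟩
      have hμ₀m' : μ₀ = m' := by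
        by_contra hnem
        have h1 := hμ₀.1
        rw [hg, MvPolynomial.mem_support_iff, MvPolynomial.coeff_sub,
          MvPolynomial.coeff_monomial, if_neg (fun he => hnem he.symm)] at h1
        have hin : μ₀ ∈ r.support := MvPolynomial.mem_support_iff.mpr (by
          intro hcz
          apply h1
          rw [hcz]
          ring)
        exact hr.2 μ₀ hin hred0
      have hμg : μ ∈ g.support := by
        rw [hg, MvPolynomial.mem_support_iff, MvPolynomial.coeff_sub,
          MvPolynomial.coeff_monomial, if_neg (fun he => hne he.symm)]
        have := MvPolynomial.mem_support_iff.mp hμ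
        intro hcz
        exact this (sub_eq_zero.mp hcz).symm
      have := hμ₀.2 μ hμg (by rw [hμ₀m']; exact hne)
      rwa [hμ₀m'] at this
    intro μ hμ
    by_cases hcase : μ = m'
    · subst hcase
      exact h μ (hr.2 μ hμ) hQ
    · have hSsub : S μ.support ⊆ S m'.support := by
        refine claim_S O hS m' _ μ (hlt μ hμ hcase) ?_ rfl
        have := hvars μ hμ
        rwa [hgood, hVset] at this
      have h1 : ¬ Reducible O (Ideal.span (S μ.support)) μ := by
        rintro ⟨p, hp, hlm⟩
        exact hr.2 μ hμ ⟨p, Ideal.span_mono hSsub hp, hlm⟩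
      exact h μ h1 (fun p hp => hQ (hSsub hp))
end

section
/- Let G = (V,E) be a finite simple graph equipped with a linear order on V. Call a set W ⊆ V closed if W = Desc(W) and there are no 2-hops, 3-hops, 4-hops or lassos with respect to W, and call a closure of U ⊆ V any minimal closed set containing U (minimal with respect to set inclusion among closed supersets of U). Then every set U ⊆ V has exactly one closure. -/
/-!
Closed sets are stable under intersection. An obstruction (a 2-, 3- or 4-hop, or a lasso) with
respect to `W₁ ∩ W₂` either has all its inner vertices in `W₁`, and is then an obstruction with
respect to `W₂`, or has an inner vertex outside `W₁`; cutting it at the nearest vertices of `W₁`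
on either side of that vertex then leaves an obstruction with respect to `W₁` (for a hop, a hop
that is no longer). As `Desc` is monotone, the closed supersets of `U`, among them `V` itself, form
a finite family stable under intersection, so its minimal members all coincide.
-/

/-- `v` is a descendant of `u`: there is a decreasing path (with respect to the linear
order on the vertices) from `u` to `v`; every vertex is a descendant of itself. -/
def Descends {V : Type*} [LT V] (G : SimpleGraph V) (u v : V) : Prop :=
  ∃ l : List V, l ≠ [] ∧ l.Chain' G.Adj ∧ l.Chain' (· > ·) ∧
    l.head? = some u ∧ l.getLast? = some v

/-- The set of descendants of a vertex set `U`. -/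
def Desc {V : Type*} [LT V] (G : SimpleGraph V) (U : Set V) : Set V :=
  {v | ∃ u ∈ U, Descends G u v}

/-- A `τ`-hop with respect to `U` that is a simple path: a simple path of length `τ`
with both (distinct) endpoints in `U` and all internal vertices outside `U`. -/
def IsPathHop {V : Type*} (G : SimpleGraph V) (U : Set V) (τ : ℕ) : Prop :=
  ∃ f : Fin (τ + 1) → V, Function.Injective f ∧
    (∀ i : Fin τ, G.Adj (f i.castSucc) (f i.succ)) ∧
    f 0 ∈ U ∧ f (Fin.last τ) ∈ U ∧
    ∀ i : Fin (τ + 1), i ≠ 0 → i ≠ Fin.last τ → f i ∉ U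

/-- A `τ`-hop with respect to `U` that is a simple cycle: a simple cycle of length
`τ ≥ 3` whose (coinciding) endpoints lie in `U` and whose other vertices are
outside `U`. -/
def IsCycleHop {V : Type*} (G : SimpleGraph V) (U : Set V) (τ : ℕ) : Prop :=
  3 ≤ τ ∧ ∃ f : Fin (τ + 1) → V, f 0 = f (Fin.last τ) ∧
    (Function.Injective fun i : Fin τ => f i.castSucc) ∧
    (∀ i : Fin τ, G.Adj (f i.castSucc) (f i.succ)) ∧
    f 0 ∈ U ∧
    ∀ i : Fin (τ + 1), i ≠ 0 → i ≠ Fin.last τ → f i ∉ U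

/-- A `τ`-hop with respect to `U`: a simple path or simple cycle of length `τ` whose
endpoints are in `U` and whose other vertices are not in `U`. -/
def IsHop {V : Type*} (G : SimpleGraph V) (U : Set V) (τ : ℕ) : Prop :=
  IsPathHop G U τ ∨ IsCycleHop G U τ

/-- A lasso with respect to `U`: a walk `(v₁, v₂, v₃, v₄, v₅)` with `v₂ = v₅`, all
other vertices distinct, and only `v₁` in `U`. -/
def IsLasso {V : Type*} (G : SimpleGraph V) (U : Set V) : Prop :=
  ∃ v₁ v₂ v₃ v₄ : V, [v₁, v₂, v₃, v₄].Nodup ∧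
    v₁ ∈ U ∧ v₂ ∉ U ∧ v₃ ∉ U ∧ v₄ ∉ U ∧
    G.Adj v₁ v₂ ∧ G.Adj v₂ v₃ ∧ G.Adj v₃ v₄ ∧ G.Adj v₄ v₂

/-- `W` is closed: `W = Desc(W)` and there are no 2-, 3-, 4-hops or lassos with
respect to `W`. -/
def ClosedRT {V : Type*} [LT V] (G : SimpleGraph V) (W : Set V) : Prop :=
  W = Desc G W ∧ ¬ IsHop G W 2 ∧ ¬ IsHop G W 3 ∧ ¬ IsHop G W 4 ∧ ¬ IsLasso G W

/-- `W` is a closure of `U`: a closed superset of `U` that is minimal with respect to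
set inclusion among closed supersets of `U`. -/
def IsClosureRT {V : Type*} [LT V] (G : SimpleGraph V) (U W : Set V) : Prop :=
  ClosedRT G W ∧ U ⊆ W ∧ ∀ W', ClosedRT G W' → U ⊆ W' → W' ⊆ W → W' = W

open Set

theorem existsUnique_minimal_of_inf_closed {α : Type*} [SemilatticeInf α] [WellFoundedLT α]
    {P : α → Prop} (hP : ∃ a, P a) (hinf : ∀ a b, P a → P b → P (a ⊓ b)) :
    ∃! a, Minimal P a := by
  obtain ⟨a, ha⟩ := exists_minimal_of_wellFoundedLT P hP
  refine ⟨a, ha, fun b hb => ?_⟩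
  have hba := hinf b a hb.prop ha.prop
  exact le_antisymm ((hb.le_of_le hba inf_le_left).trans inf_le_right)
    ((ha.le_of_le hba inf_le_right).trans inf_le_left)

theorem exists_gap {P : ℕ → Prop} {j i k : ℕ} (hj : P j) (hk : P k) (hji : j ≤ i) (hik : i ≤ k)
    (hi : ¬ P i) :
    ∃ a b, j ≤ a ∧ a < i ∧ i < b ∧ b ≤ k ∧ P a ∧ P b ∧ ∀ m, a < m → m < b → ¬ P m := by
  classical
  have hex : ∃ d, P (i + d) := ⟨k - i, by rwa [Nat.add_sub_cancel' hik]⟩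
  have hPa : P (Nat.findGreatest P i) := Nat.findGreatest_spec hji hj
  have hai : Nat.findGreatest P i < i :=
    (Nat.findGreatest_le i).lt_of_ne fun h => hi (h ▸ hPa)
  have hd : Nat.find hex ≠ 0 := fun h => hi (by simpa [h] using Nat.find_spec hex)
  refine ⟨Nat.findGreatest P i, i + Nat.find hex, Nat.le_findGreatest hji hj, hai, by omega,
    ?_, hPa, Nat.find_spec hex, fun m ham hmb => ?_⟩
  · have := Nat.find_min' hex (m := k - i) (by rwa [Nat.add_sub_cancel' hik])
    omega
  · rcases le_or_gt m i with hmi | hmi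
    · exact Nat.findGreatest_is_greatest ham hmi
    · have := Nat.find_min hex (m := m - i) (by omega)
      rwa [Nat.add_sub_cancel' hmi.le] at this

theorem Fin.clamp_eq_mk {m n : ℕ} (h : m ≤ n) : Fin.clamp m n = ⟨m, Nat.lt_succ_of_le h⟩ :=
  Fin.ext (by simpa using h)

section Hops

variable {V : Type*} {G : SimpleGraph V} {W : Set V}

theorem isPathHop_of_segment {f : ℕ → V} {a b : ℕ} (hab : a ≤ b) (hinj : InjOn f (Icc a b))
    (hadj : ∀ m, a ≤ m → m < b → G.Adj (f m) (f (m + 1))) (ha : f a ∈ W) (hb : f b ∈ W)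
    (hint : ∀ m, a < m → m < b → f m ∉ W) : IsPathHop G W (b - a) := by
  refine ⟨fun i => f (a + i), fun i i' h => Fin.ext ?_, fun i => hadj _ (by simp) ?_,
    ha, by simpa [Nat.add_sub_cancel' hab] using hb, fun i h0 hl => hint _ ?_ ?_⟩
  · have := hinj ⟨Nat.le_add_right a i, by omega⟩ ⟨Nat.le_add_right a i', by omega⟩ h
    omega
  · rw [Fin.val_castSucc]
    omega
  · have : (i : ℕ) ≠ 0 := fun h => h0 (Fin.ext h)
    omega
  · have : (i : ℕ) ≠ b - a := fun h => hl (Fin.ext h)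
    omega

/-- Indexing by `ℕ` rather than `Fin (τ + 1)` lets sub-paths be cut out by index arithmetic. -/
theorem isPathHop_iff_nat {τ : ℕ} :
    IsPathHop G W τ ↔ ∃ f : ℕ → V, InjOn f (Iic τ) ∧ (∀ m < τ, G.Adj (f m) (f (m + 1))) ∧
      f 0 ∈ W ∧ f τ ∈ W ∧ ∀ m, 0 < m → m < τ → f m ∉ W := by
  constructor
  · rintro ⟨f, hinj, hadj, h0, hτ, hint⟩
    refine ⟨fun m => f (Fin.clamp m τ), fun m hm m' hm' h => ?_, fun m hm => ?_,
      by simpa [Fin.clamp_eq_mk τ.zero_le] using h0, by simpa [Fin.clamp_eq_last] using hτ,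
      fun m h0 hτ => hint _ ?_ ?_⟩
    · have := congrArg Fin.val (hinj h)
      simp only [Fin.coe_clamp, mem_Iic] at this hm hm'
      omega
    · simp only [Fin.clamp_eq_mk hm.le, Fin.clamp_eq_mk hm]
      exact hadj ⟨m, hm⟩
    · rw [Fin.clamp_eq_mk hτ.le, Ne, Fin.ext_iff]
      exact h0.ne'
    · rw [Fin.clamp_eq_mk hτ.le, Ne, Fin.ext_iff]
      exact hτ.ne
  · rintro ⟨f, hinj, hadj, h0, hτ, hint⟩
    simpa using isPathHop_of_segment (Nat.zero_le τ) (hinj.mono fun m hm => hm.2)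
      (fun m _ => hadj m) h0 hτ hint

theorem isCycleHop_iff_nat {τ : ℕ} :
    IsCycleHop G W τ ↔ 3 ≤ τ ∧ ∃ f : ℕ → V, f 0 = f τ ∧ InjOn f (Iio τ) ∧
      (∀ m < τ, G.Adj (f m) (f (m + 1))) ∧ f 0 ∈ W ∧ ∀ m, 0 < m → m < τ → f m ∉ W := by
  constructor
  · rintro ⟨hτ, f, hcl, hinj, hadj, h0, hint⟩
    refine ⟨hτ, fun m => f (Fin.clamp m τ), ?_, fun m hm m' hm' h => ?_, fun m hm => ?_,
      by simpa [Fin.clamp_eq_mk τ.zero_le] using h0, fun m h0 hτ => hint _ ?_ ?_⟩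
    · simpa [Fin.clamp_eq_mk τ.zero_le, Fin.clamp_eq_last] using hcl
    · simp only [mem_Iio] at hm hm'
      have := congrArg Fin.val (hinj (a₁ := ⟨m, hm⟩) (a₂ := ⟨m', hm'⟩)
        (by simpa [Fin.clamp_eq_mk hm.le, Fin.clamp_eq_mk hm'.le] using h))
      simpa using this
    · simp only [Fin.clamp_eq_mk hm.le, Fin.clamp_eq_mk hm]
      exact hadj ⟨m, hm⟩
    · rw [Fin.clamp_eq_mk hτ.le, Ne, Fin.ext_iff]
      exact h0.ne'
    · rw [Fin.clamp_eq_mk hτ.le, Ne, Fin.ext_iff]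
      exact hτ.ne
  · rintro ⟨hτ, f, hcl, hinj, hadj, h0, hint⟩
    refine ⟨hτ, fun i => f i, hcl, fun i i' h => Fin.ext (hinj i.isLt i'.isLt h),
      fun i => hadj i i.isLt, h0, fun i h0 hl => hint i ?_ ?_⟩
    · exact Nat.pos_of_ne_zero fun h => h0 (Fin.ext h)
    · exact lt_of_le_of_ne (Nat.le_of_lt_succ i.isLt) fun h => hl (Fin.ext h)

theorem injOn_Ioc_of_injOn_Iio {f : ℕ → V} {τ : ℕ} (hcl : f 0 = f τ) (hinj : InjOn f (Iio τ)) :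
    InjOn f (Ioc 0 τ) := by
  have key : ∀ x ∈ Ioc 0 τ, x < τ → f x ≠ f τ := fun x hx hxτ h =>
    hx.1.ne' (hinj hxτ (hx.1.trans hxτ) (h.trans hcl.symm))
  intro x hx y hy h
  rcases hx.2.lt_or_eq with hxτ | rfl <;> rcases hy.2.lt_or_eq with hyτ | rfl
  · exact hinj hxτ hyτ h
  · exact absurd h (key x hx hxτ)
  · exact absurd h.symm (key y hy hyτ)
  · rfl

theorem exists_pathHop_of_path {f : ℕ → V} {τ i : ℕ} (hinj : InjOn f (Iic τ))
    (hadj : ∀ m < τ, G.Adj (f m) (f (m + 1))) (h0 : f 0 ∈ W) (hτ : f τ ∈ W)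
    (hi : i < τ) (hfi : f i ∉ W) : ∃ σ, 2 ≤ σ ∧ σ ≤ τ ∧ IsPathHop G W σ := by
  obtain ⟨a, b, -, hai, hib, hbτ, ha, hb, hgap⟩ :=
    exists_gap (P := (f · ∈ W)) h0 hτ i.zero_le hi.le hfi
  exact ⟨b - a, by omega, by omega, isPathHop_of_segment (by omega)
    (hinj.mono fun m hm => hm.2.trans hbτ) (fun m _ hm => hadj m (by omega)) ha hb hgap⟩

theorem exists_hop_of_cycle {f : ℕ → V} {τ i : ℕ} (hτ : 3 ≤ τ) (hcl : f 0 = f τ)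
    (hinj : InjOn f (Iio τ)) (hadj : ∀ m < τ, G.Adj (f m) (f (m + 1))) (h0 : f 0 ∈ W)
    (hi : i < τ) (hfi : f i ∉ W) : ∃ σ, 2 ≤ σ ∧ σ ≤ τ ∧ IsHop G W σ := by
  obtain ⟨a, b, -, hai, hib, hbτ, ha, hb, hgap⟩ :=
    exists_gap (P := (f · ∈ W)) h0 (hcl ▸ h0) i.zero_le hi.le hfi
  by_cases hwhole : a = 0 ∧ b = τ
  · obtain ⟨rfl, rfl⟩ := hwhole
    exact ⟨_, by omega, le_rfl, Or.inr (isCycleHop_iff_nat.2 ⟨hτ, f, hcl, hinj, hadj, h0, hgap⟩)⟩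
  · have hseg : InjOn f (Icc a b) := by
      rcases not_and_or.1 hwhole with ha0 | hbτ'
      · exact (injOn_Ioc_of_injOn_Iio hcl hinj).mono fun m hm =>
          mem_Ioc.2 ⟨(Nat.pos_of_ne_zero ha0).trans_le hm.1, hm.2.trans hbτ⟩
      · exact hinj.mono fun m hm => mem_Iio.2 (hm.2.trans_lt (lt_of_le_of_ne hbτ hbτ'))
    exact ⟨b - a, by omega, by omega, Or.inl (isPathHop_of_segment (by omega) hseg
      (fun m _ hm => hadj m (by omega)) ha hb hgap)⟩

theorem isPathHop_two {a b c : V} (hab : G.Adj a b) (hbc : G.Adj b c) (hac : a ≠ c)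
    (ha : a ∈ W) (hb : b ∉ W) (hc : c ∈ W) : IsPathHop G W 2 := by
  have hab' := G.ne_of_adj hab
  have hbc' := G.ne_of_adj hbc
  refine ⟨![a, b, c], ?_, fun i => ?_, ha, hc, fun i hi0 hil => ?_⟩
  · intro i j hij; fin_cases i <;> fin_cases j <;> simp_all
  · fin_cases i; exacts [hab, hbc]
  · fin_cases i <;> simp_all [Fin.ext_iff]

theorem isCycleHop_three {a b c : V} (hab : G.Adj a b) (hbc : G.Adj b c) (hca : G.Adj c a)
    (ha : a ∈ W) (hb : b ∉ W) (hc : c ∉ W) : IsCycleHop G W 3 := by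
  have hab' := G.ne_of_adj hab
  have hbc' := G.ne_of_adj hbc
  have hca' := G.ne_of_adj hca
  refine ⟨le_rfl, ![a, b, c, a], rfl, ?_, fun i => ?_, ha, fun i hi0 hil => ?_⟩
  · intro i j hij; fin_cases i <;> fin_cases j <;> simp_all
  · fin_cases i; exacts [hab, hbc, hca]
  · fin_cases i <;> simp_all [Fin.ext_iff]

end Hops

section Obstructions

variable {V : Type*} {G : SimpleGraph V} {W₁ W₂ : Set V}

def HasObstruction (G : SimpleGraph V) (W : Set V) : Prop :=
  (∃ τ ∈ Icc 2 4, IsHop G W τ) ∨ IsLasso G W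

theorem IsHop.inter_or {τ : ℕ} (h : IsHop G (W₁ ∩ W₂) τ) :
    (∃ σ, 2 ≤ σ ∧ σ ≤ τ ∧ IsHop G W₁ σ) ∨ IsHop G W₂ τ := by
  rcases h with h | h
  · obtain ⟨f, hinj, hadj, h0, hτ, hint⟩ := isPathHop_iff_nat.1 h
    by_cases hall : ∀ m, 0 < m → m < τ → f m ∈ W₁
    · exact Or.inr (Or.inl (isPathHop_iff_nat.2 ⟨f, hinj, hadj, h0.2, hτ.2,
        fun m hm hmτ hm₂ => hint m hm hmτ ⟨hall m hm hmτ, hm₂⟩⟩))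
    · push Not at hall
      obtain ⟨i, -, hi, hfi⟩ := hall
      obtain ⟨σ, hσ, hστ, hop⟩ := exists_pathHop_of_path hinj hadj h0.1 hτ.1 hi hfi
      exact Or.inl ⟨σ, hσ, hστ, Or.inl hop⟩
  · obtain ⟨h3, f, hcl, hinj, hadj, h0, hint⟩ := isCycleHop_iff_nat.1 h
    by_cases hall : ∀ m, 0 < m → m < τ → f m ∈ W₁
    · exact Or.inr (Or.inr (isCycleHop_iff_nat.2 ⟨h3, f, hcl, hinj, hadj, h0.2,
        fun m hm hmτ hm₂ => hint m hm hmτ ⟨hall m hm hmτ, hm₂⟩⟩))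
    · push Not at hall
      obtain ⟨i, -, hi, hfi⟩ := hall
      exact Or.inl (exists_hop_of_cycle h3 hcl hinj hadj h0.1 hi hfi)

theorem IsLasso.inter_or (h : IsLasso G (W₁ ∩ W₂)) : HasObstruction G W₁ ∨ IsLasso G W₂ := by
  obtain ⟨v₁, v₂, v₃, v₄, hnd, hv₁, hv₂, hv₃, hv₄, h₁₂, h₂₃, h₃₄, h₄₂⟩ := h
  have hnd' := hnd
  simp only [List.nodup_cons, List.mem_cons, List.not_mem_nil, or_false, not_or] at hnd'
  obtain ⟨⟨-, h₁₃, h₁₄⟩, ⟨-, h₂₄⟩, -⟩ := hnd'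
  have hop2 : IsPathHop G W₁ 2 → HasObstruction G W₁ := fun h => Or.inl ⟨2, by simp, Or.inl h⟩
  by_cases h₂ : v₂ ∈ W₁ <;> by_cases h₃ : v₃ ∈ W₁ <;> by_cases h₄ : v₄ ∈ W₁
  · exact Or.inr ⟨v₁, v₂, v₃, v₄, hnd, hv₁.2, fun h => hv₂ ⟨h₂, h⟩, fun h => hv₃ ⟨h₃, h⟩,
      fun h => hv₄ ⟨h₄, h⟩, h₁₂, h₂₃, h₃₄, h₄₂⟩
  · exact Or.inl (hop2 (isPathHop_two h₃₄ h₄₂ (G.ne_of_adj h₂₃).symm h₃ h₄ h₂))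
  · exact Or.inl (hop2 (isPathHop_two h₂₃ h₃₄ h₂₄ h₂ h₃ h₄))
  · exact Or.inl (Or.inl ⟨3, by simp, Or.inr (isCycleHop_three h₂₃ h₃₄ h₄₂ h₂ h₃ h₄)⟩)
  · exact Or.inl (hop2 (isPathHop_two h₁₂ h₂₃ h₁₃ hv₁.1 h₂ h₃))
  · exact Or.inl (hop2 (isPathHop_two h₁₂ h₂₃ h₁₃ hv₁.1 h₂ h₃))
  · exact Or.inl (hop2 (isPathHop_two h₁₂ h₄₂.symm h₁₄ hv₁.1 h₂ h₄))
  · exact Or.inl (Or.inr ⟨v₁, v₂, v₃, v₄, hnd, hv₁.1, h₂, h₃, h₄, h₁₂, h₂₃, h₃₄, h₄₂⟩)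

theorem HasObstruction.inter_or (h : HasObstruction G (W₁ ∩ W₂)) :
    HasObstruction G W₁ ∨ HasObstruction G W₂ := by
  rcases h with ⟨τ, hτ, hop⟩ | hlasso
  · rcases hop.inter_or with ⟨σ, hσ, hστ, hop₁⟩ | hop₂
    · exact Or.inl (Or.inl ⟨σ, ⟨hσ, hστ.trans hτ.2⟩, hop₁⟩)
    · exact Or.inr (Or.inl ⟨τ, hτ, hop₂⟩)
  · exact hlasso.inter_or.imp id Or.inr

theorem not_hasObstruction_univ : ¬ HasObstruction G univ := by
  rintro (⟨τ, hτ, hop | hop⟩ | ⟨-, v₂, -, -, -, -, hv₂, -⟩)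
  · obtain ⟨f, -, -, -, -, hint⟩ := isPathHop_iff_nat.1 hop
    exact hint 1 one_pos hτ.1 (mem_univ _)
  · obtain ⟨-, f, -, -, -, -, hint⟩ := isCycleHop_iff_nat.1 hop
    exact hint 1 one_pos hτ.1 (mem_univ _)
  · exact hv₂ (mem_univ _)

end Obstructions

section Closure

variable {V : Type*} [LT V] {G : SimpleGraph V}

theorem descends_refl (v : V) : Descends G v v :=
  ⟨[v], List.cons_ne_nil v [], List.isChain_singleton v, List.isChain_singleton v, rfl, rfl⟩

theorem subset_desc (W : Set V) : W ⊆ Desc G W := fun v hv => ⟨v, hv, descends_refl v⟩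

theorem desc_mono {W₁ W₂ : Set V} (h : W₁ ⊆ W₂) : Desc G W₁ ⊆ Desc G W₂ :=
  fun _ ⟨u, hu, hdesc⟩ => ⟨u, h hu, hdesc⟩

theorem closedRT_iff {W : Set V} : ClosedRT G W ↔ W = Desc G W ∧ ¬ HasObstruction G W := by
  simp only [ClosedRT, HasObstruction, not_or, not_exists, not_and, mem_Icc, and_imp]
  refine and_congr_right fun _ => ⟨fun ⟨h2, h3, h4, hl⟩ => ⟨fun τ hτ₂ hτ₄ => ?_, hl⟩,
    fun ⟨h, hl⟩ => ⟨h 2 le_rfl (by norm_num), h 3 (by norm_num) (by norm_num),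
      h 4 (by norm_num) le_rfl, hl⟩⟩
  interval_cases τ <;> assumption

theorem ClosedRT.inter {W₁ W₂ : Set V} (h₁ : ClosedRT G W₁) (h₂ : ClosedRT G W₂) :
    ClosedRT G (W₁ ∩ W₂) := by
  rw [closedRT_iff] at *
  refine ⟨(subset_desc _).antisymm (subset_inter ?_ ?_), fun h => ?_⟩
  · exact (desc_mono inter_subset_left).trans h₁.1.symm.subset
  · exact (desc_mono inter_subset_right).trans h₂.1.symm.subset
  · exact h.inter_or.elim h₁.2 h₂.2

theorem closedRT_univ : ClosedRT G (univ : Set V) :=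
  closedRT_iff.2 ⟨(subset_desc univ).antisymm (subset_univ _), not_hasObstruction_univ⟩

theorem isClosureRT_iff_minimal {U W : Set V} :
    IsClosureRT G U W ↔ Minimal (fun W' => ClosedRT G W' ∧ U ⊆ W') W := by
  refine and_assoc.symm.trans (and_congr_right fun _ => forall_congr' fun W' => ?_)
  exact ⟨fun h hW' hle => (h hW'.1 hW'.2 hle).symm.le, fun h hc hU hle =>
    hle.antisymm (h ⟨hc, hU⟩ hle)⟩

end Closure

/-- in a finite simple graph with a linear order on the vertices, every
vertex set has exactly one closure. -/
theorem stmt_13 {V : Type*} [Fintype V] [LinearOrder V] (G : SimpleGraph V)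
    (U : Set V) : ∃! W : Set V, IsClosureRT G U W := by
  simp only [isClosureRT_iff_minimal]
  exact existsUnique_minimal_of_inf_closed ⟨univ, closedRT_univ, subset_univ U⟩
    fun _ _ h₁ h₂ => ⟨h₁.1.inter h₂.1, subset_inter h₁.2 h₂.2⟩
end

section
/- Fix a positive integer d, and for each n ≥ d let G be a random graph on n labelled vertices in which each of the n(n−1)/2 possible edges is included independently with probability d/n (the Erdős–Rényi model G(n, d/n)). Let (ε_n) and (δ_n) be sequences of positive reals with ε_n·δ_n·log n → ∞ as n → ∞. Then the probability that G is ((4d)^{−(1+δ_n)(1+ε_n)/ε_n}·n, ε_n)-sparse tends to 1 as n → ∞. -/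
/-!
If `G` is not `(ℓ, ε)`-sparse, some vertex set `U` of size `u ≤ ℓ` contains a set `F` of
`m = ⌊(1+ε)u⌋ + 1` pairs that are all edges of `G`, an event of probability `pᵐ`. By the union
bound the failure probability is at most `∑ᵤ C(n,u) C(C(u,2),m) pᵐ`. For `p = d/n` and
`c = e·u·d/(2n)` the `u`-th term is at most `(e²d/2)ᵘ c^(m-u)`, and `u ≤ (4d)^(-(1+δ)(1+ε)/ε) n`
forces `c ≤ (4d)^(-1/ε)`. Since `m - u ≥ εu`, the term is at most `(e²/8)ᵘ`, uniformly in `n`;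
since `m - u ≥ 1`, it is at most `c (e²d/2)ᵘ`, which tends to `0` for fixed `u`. Dominated
convergence for series (Tannery's theorem) then sends the whole sum to `0`.
-/

open scoped Classical

/-- A graph is `(ℓ, ε)`-sparse (with a real size threshold `ℓ`) if every vertex set
`U` of size at most `ℓ` spans at most `(1+ε)|U|` edges. -/
def SparseR {V : Type*} (G : SimpleGraph V) (ℓ : ℝ) (ε : ℝ) : Prop :=
  ∀ U : Set V, (U.ncard : ℝ) ≤ ℓ → ((EdgesWithin G U).ncard : ℝ) ≤ (1 + ε) * U.ncard

/-- The probability, in the Erdős–Rényi model `G(n, p)` where each of the `n(n-1)/2`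
possible edges is included independently with probability `p`, that the sampled graph
satisfies the property `A`: the sum over all edge sets `E` of
`p^{|E|}(1-p)^{n(n-1)/2-|E|}` times the indicator that the corresponding graph
satisfies `A`. -/
noncomputable def erProb (n : ℕ) (p : ℝ) (A : SimpleGraph (Fin n) → Prop) : ℝ :=
  ∑ E : Finset {e : Sym2 (Fin n) // ¬ e.IsDiag},
    if A (SimpleGraph.fromEdgeSet (Subtype.val '' (E : Set {e : Sym2 (Fin n) // ¬ e.IsDiag})))
    then p ^ E.card * (1 - p) ^ (Fintype.card {e : Sym2 (Fin n) // ¬ e.IsDiag} - E.card)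
    else 0

open Finset Filter Topology Real

theorem Nat.choose_le_exp_mul_div_pow (a m : ℕ) : (a.choose m : ℝ) ≤ (exp 1 * a / m) ^ m := by
  rcases Nat.eq_zero_or_pos m with rfl | hm
  · simp
  have hm0 : (m : ℝ) ≠ 0 := by positivity
  calc (a.choose m : ℝ) ≤ (a : ℝ) ^ m / m.factorial := Nat.choose_le_pow_div m a
    _ = (a / m : ℝ) ^ m * ((m : ℝ) ^ m / m.factorial) := by rw [div_pow]; field_simp
    _ ≤ (a / m : ℝ) ^ m * exp m := by gcongr; exact Real.pow_div_factorial_le_exp _ m.cast_nonneg m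
    _ = (exp 1 * a / m) ^ m := by rw [← exp_one_pow, ← mul_pow]; ring

section EdgeSetWeight

variable {α : Type*} [Fintype α]

noncomputable def edgeSetWeight (p : ℝ) (E : Finset α) : ℝ :=
  p ^ #E * (1 - p) ^ (Fintype.card α - #E)

theorem edgeSetWeight_nonneg {p : ℝ} (hp₀ : 0 ≤ p) (hp₁ : p ≤ 1) (E : Finset α) :
    0 ≤ edgeSetWeight p E :=
  mul_nonneg (pow_nonneg hp₀ _) (pow_nonneg (sub_nonneg.2 hp₁) _)

theorem sum_edgeSetWeight_superset (p : ℝ) (F : Finset α) :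
    ∑ E with F ⊆ E, edgeSetWeight p E = p ^ #F := by
  have hdisj : ∀ t ∈ Fᶜ.powerset, Disjoint F t := fun t ht =>
    disjoint_of_subset_right (mem_powerset.1 ht) disjoint_compl_right
  calc ∑ E with F ⊆ E, edgeSetWeight p E
      = ∑ t ∈ Fᶜ.powerset, edgeSetWeight p (F ∪ t) := by
        refine sum_nbij' (· \ F) (F ∪ ·) ?_ ?_ ?_ ?_ fun E hE => ?_
        · exact fun E _ => mem_powerset.2 fun x hx => mem_compl.2 (mem_sdiff.1 hx).2
        · exact fun t _ => mem_filter.2 ⟨mem_univ _, subset_union_left⟩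
        · intro E hE; simpa using union_sdiff_of_subset (mem_filter.1 hE).2
        · intro t ht; exact union_sdiff_cancel_left (hdisj t ht)
        · rw [union_sdiff_of_subset (mem_filter.1 hE).2]
    _ = p ^ #F * ∑ t ∈ Fᶜ.powerset, p ^ #t * (1 - p) ^ (#Fᶜ - #t) := by
        rw [mul_sum]
        refine sum_congr rfl fun t ht => ?_
        rw [edgeSetWeight, card_union_of_disjoint (hdisj t ht), pow_add, card_compl, Nat.sub_sub]
        ring
    _ = p ^ #F := by rw [sum_pow_mul_eq_add_pow]; simp

theorem sum_edgeSetWeight (p : ℝ) : ∑ E : Finset α, edgeSetWeight p E = 1 := by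
  simpa using sum_edgeSetWeight_superset (α := α) p ∅

theorem sum_edgeSetWeight_le_of_forall_exists_subset {p : ℝ} (hp₀ : 0 ≤ p) (hp₁ : p ≤ 1)
    {ι : Type*} (W : Finset ι) (F : ι → Finset α) (S : Finset (Finset α))
    (hS : ∀ E ∈ S, ∃ i ∈ W, F i ⊆ E) :
    ∑ E ∈ S, edgeSetWeight p E ≤ ∑ i ∈ W, p ^ #(F i) := by
  calc ∑ E ∈ S, edgeSetWeight p E
      ≤ ∑ E ∈ S, ∑ i ∈ W with F i ⊆ E, edgeSetWeight p E := sum_le_sum fun E hE => by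
        obtain ⟨i, hi, hFE⟩ := hS E hE
        exact single_le_sum (f := fun _ => edgeSetWeight p E)
          (fun _ _ => edgeSetWeight_nonneg hp₀ hp₁ E) (mem_filter.2 ⟨hi, hFE⟩)
    _ ≤ ∑ E, ∑ i ∈ W with F i ⊆ E, edgeSetWeight p E :=
        sum_le_sum_of_subset_of_nonneg (subset_univ S) fun E _ _ =>
          sum_nonneg fun _ _ => edgeSetWeight_nonneg hp₀ hp₁ E
    _ = ∑ i ∈ W, ∑ E with F i ⊆ E, edgeSetWeight p E := sum_comm' (by simp [and_comm])
    _ = ∑ i ∈ W, p ^ #(F i) := sum_congr rfl fun i _ => sum_edgeSetWeight_superset p (F i)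

end EdgeSetWeight

section Witnesses

variable {V : Type*} [Fintype V]

abbrev graphOfEdges (E : Finset {e : Sym2 V // ¬ e.IsDiag}) : SimpleGraph V :=
  SimpleGraph.fromEdgeSet (Subtype.val '' (E : Set {e : Sym2 V // ¬ e.IsDiag}))

noncomputable def pairsWithin (U : Finset V) : Finset {e : Sym2 V // ¬ e.IsDiag} :=
  {e | ∀ v ∈ e.1, v ∈ U}

theorem card_pairsWithin_le (U : Finset V) : #(pairsWithin U) ≤ (#U).choose 2 := by
  rw [← Sym2.card_image_offDiag U, ← card_map (Function.Embedding.subtype _)]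
  refine card_le_card fun e he => ?_
  obtain ⟨⟨e, hdiag⟩, hmem, rfl⟩ := mem_map.1 he
  induction e using Sym2.ind with
  | _ a b =>
    have hab : ∀ v ∈ s(a, b), v ∈ U := (mem_filter.1 hmem).2
    refine mem_image.2 ⟨(a, b), mem_offDiag.2 ⟨?_, ?_, ?_⟩, rfl⟩
    · exact hab a (Sym2.mem_mk_left a b)
    · exact hab b (Sym2.mem_mk_right a b)
    · simpa using hdiag

noncomputable def violatingEdgeCount (ε : ℝ) (u : ℕ) : ℕ := ⌊(1 + ε) * u⌋₊ + 1

theorem violatingEdgeCount_le_iff {ε : ℝ} (hε : -1 ≤ ε) (u k : ℕ) :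
    violatingEdgeCount ε u ≤ k ↔ (1 + ε) * u < k := by
  have : 0 ≤ (1 + ε) * u := mul_nonneg (by linarith) u.cast_nonneg
  rw [violatingEdgeCount, Nat.add_one_le_iff, Nat.floor_lt this]

theorem lt_violatingEdgeCount {ε : ℝ} (hε : -1 ≤ ε) (u : ℕ) :
    (1 + ε) * u < violatingEdgeCount ε u :=
  (violatingEdgeCount_le_iff hε u _).1 le_rfl

theorem exists_witness_of_not_sparseR {ℓ ε : ℝ} (hε : -1 ≤ ε)
    (E : Finset {e : Sym2 V // ¬ e.IsDiag}) (h : ¬ SparseR (graphOfEdges E) ℓ ε) :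
    ∃ U : Finset V, (#U : ℝ) ≤ ℓ ∧
      ∃ F ∈ (pairsWithin U).powersetCard (violatingEdgeCount ε #U), F ⊆ E := by
  simp only [SparseR, not_forall, not_le, exists_prop] at h
  obtain ⟨U, hUℓ, hdense⟩ := h
  rw [Set.ncard_eq_toFinset_card' U] at hUℓ hdense
  have hsub : EdgesWithin (graphOfEdges E) U ⊆
      Subtype.val '' (↑(E ∩ pairsWithin U.toFinset) : Set {e : Sym2 V // ¬ e.IsDiag}) := by
    rintro _ ⟨hE, hU⟩
    rw [SimpleGraph.edgeSet_fromEdgeSet] at hE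
    obtain ⟨⟨e, he, rfl⟩, -⟩ := hE
    refine ⟨e, mem_inter.2 ⟨he, mem_filter.2 ⟨mem_univ e, fun v hv => ?_⟩⟩, rfl⟩
    exact Set.mem_toFinset.2 (hU v hv)
  have hcard : (EdgesWithin (graphOfEdges E) U).ncard ≤ #(E ∩ pairsWithin U.toFinset) := by
    grw [Set.ncard_le_ncard hsub (Set.toFinite _),
      Set.ncard_image_of_injective _ Subtype.val_injective, Set.ncard_coe_finset]
  have hm : violatingEdgeCount ε #U.toFinset ≤ #(E ∩ pairsWithin U.toFinset) :=
    (violatingEdgeCount_le_iff hε _ _).2 (hdense.trans_le (by exact_mod_cast hcard))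
  obtain ⟨F, hF, hFcard⟩ := exists_subset_card_eq hm
  exact ⟨U.toFinset, hUℓ, F, mem_powersetCard.2 ⟨hF.trans inter_subset_right, hFcard⟩,
    hF.trans inter_subset_left⟩

end Witnesses

theorem erProb_eq_sum (n : ℕ) (p : ℝ) (A : SimpleGraph (Fin n) → Prop) :
    erProb n p A =
      ∑ E : Finset {e : Sym2 (Fin n) // ¬ e.IsDiag} with A (graphOfEdges E), edgeSetWeight p E := by
  rw [erProb, sum_filter]
  rfl

theorem erProb_nonneg (n : ℕ) {p : ℝ} (hp₀ : 0 ≤ p) (hp₁ : p ≤ 1) (A : SimpleGraph (Fin n) → Prop) :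
    0 ≤ erProb n p A := by
  rw [erProb_eq_sum]
  exact sum_nonneg fun E _ => edgeSetWeight_nonneg hp₀ hp₁ E

theorem erProb_not (n : ℕ) (p : ℝ) (A : SimpleGraph (Fin n) → Prop) :
    erProb n p (fun G => ¬ A G) = 1 - erProb n p A := by
  rw [eq_sub_iff_add_eq, erProb, erProb, ← sum_add_distrib]
  refine (sum_congr rfl fun E _ => ?_).trans (sum_edgeSetWeight p)
  by_cases h : A (graphOfEdges E) <;> simp [h, edgeSetWeight]

noncomputable def expectedWitnesses (n : ℕ) (p ℓ ε : ℝ) (u : ℕ) : ℝ :=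
  if (u : ℝ) ≤ ℓ then
    n.choose u * (u.choose 2).choose (violatingEdgeCount ε u) * p ^ violatingEdgeCount ε u
  else 0

theorem erProb_not_sparseR_le (n : ℕ) {p ℓ ε : ℝ} (hp₀ : 0 ≤ p) (hp₁ : p ≤ 1) (hε : -1 ≤ ε) :
    erProb n p (fun G => ¬ SparseR G ℓ ε) ≤
      ∑' u, expectedWitnesses n p ℓ ε u := by
  set m := violatingEdgeCount ε
  let W := ({U : Finset (Fin n) | (#U : ℝ) ≤ ℓ} : Finset _).sigma
    fun U => (pairsWithin U).powersetCard (m #U)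
  calc erProb n p (fun G => ¬ SparseR G ℓ ε)
      ≤ ∑ UF ∈ W, p ^ #UF.2 := by
        rw [erProb_eq_sum]
        refine sum_edgeSetWeight_le_of_forall_exists_subset hp₀ hp₁ W Sigma.snd _ fun E hE => ?_
        obtain ⟨U, hU, F, hF, hFE⟩ := exists_witness_of_not_sparseR hε E (by simpa using hE)
        exact ⟨⟨U, F⟩, mem_sigma.2 ⟨mem_filter.2 ⟨mem_univ U, hU⟩, hF⟩, hFE⟩
    _ = ∑ U : Finset (Fin n) with (#U : ℝ) ≤ ℓ,
          ((#(pairsWithin U)).choose (m #U) : ℝ) * p ^ m #U := by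
        rw [sum_sigma]
        refine sum_congr rfl fun U _ => ?_
        rw [sum_congr rfl fun F hF => by rw [(mem_powersetCard.1 hF).2], sum_const,
          card_powersetCard, nsmul_eq_mul]
    _ ≤ ∑ U : Finset (Fin n) with (#U : ℝ) ≤ ℓ,
          (((#U).choose 2).choose (m #U) : ℝ) * p ^ m #U := by
        gcongr with U
        exact card_pairsWithin_le U
    _ = ∑ u ∈ range (n + 1), expectedWitnesses n p ℓ ε u := by
        rw [sum_filter, ← powerset_univ, sum_powerset_apply_card (fun u => if (u : ℝ) ≤ ℓ then
          ((u.choose 2).choose (m u) : ℝ) * p ^ m u else 0)]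
        simp [expectedWitnesses, m, mul_assoc]
    _ = ∑' u, expectedWitnesses n p ℓ ε u := by
        refine (tsum_eq_sum fun u hu => ?_).symm
        simp [expectedWitnesses, Nat.choose_eq_zero_of_lt (by simpa using hu : n < u)]

theorem choose_mul_choose_mul_pow_le (n u m : ℕ) {p : ℝ} (hp : 0 ≤ p) (hum : u ≤ m) :
    (n.choose u : ℝ) * (u.choose 2).choose m * p ^ m ≤
      (exp 1 ^ 2 * n * p / 2) ^ u * (exp 1 * u * p / 2) ^ (m - u) := by
  have hpairs : exp 1 * (u.choose 2 : ℝ) / m ≤ exp 1 * u / 2 := by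
    refine div_le_of_le_mul₀ m.cast_nonneg (by positivity) ?_
    have hum' : (u : ℝ) ≤ m := by exact_mod_cast hum
    have : (u : ℝ) * (u - 1) ≤ u * m := mul_le_mul_of_nonneg_left (by linarith) u.cast_nonneg
    rw [Nat.cast_choose_two]
    nlinarith [mul_le_mul_of_nonneg_left this (exp_pos 1).le]
  have hK : (exp 1 * n / u) ^ u * (exp 1 * u * p / 2) ^ u = (exp 1 ^ 2 * n * p / 2) ^ u := by
    rcases Nat.eq_zero_or_pos u with rfl | hu
    · simp
    rw [← mul_pow]
    congr 1
    field_simp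
  calc (n.choose u : ℝ) * (u.choose 2).choose m * p ^ m
      ≤ (exp 1 * n / u) ^ u * (exp 1 * u / 2) ^ m * p ^ m := by
        gcongr
        · exact Nat.choose_le_exp_mul_div_pow n u
        · exact (Nat.choose_le_exp_mul_div_pow _ m).trans (by gcongr)
    _ = (exp 1 * n / u) ^ u * (exp 1 * u * p / 2) ^ u * (exp 1 * u * p / 2) ^ (m - u) := by
        rw [mul_assoc, mul_assoc, ← pow_add, Nat.add_sub_cancel' hum, ← mul_pow]
        ring_nf
    _ = (exp 1 ^ 2 * n * p / 2) ^ u * (exp 1 * u * p / 2) ^ (m - u) := by rw [hK]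

theorem mul_le_rpow_neg_inv {a ε δ x : ℝ} (ha : 1 ≤ a) (hε : 0 < ε) (hδ : 0 ≤ δ)
    (hx : x ≤ a ^ (-((1 + δ) * (1 + ε) / ε))) : a * x ≤ a ^ (-ε⁻¹) := by
  have hexp : 1 + -((1 + δ) * (1 + ε) / ε) ≤ -ε⁻¹ := by
    rw [← sub_nonneg]
    have : -ε⁻¹ - (1 + -((1 + δ) * (1 + ε) / ε)) = δ * (1 + ε) / ε := by field_simp; ring
    rw [this]
    positivity
  calc a * x ≤ a * a ^ (-((1 + δ) * (1 + ε) / ε)) := by gcongr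
    _ = a ^ (1 + -((1 + δ) * (1 + ε) / ε)) := by rw [rpow_add (by linarith), rpow_one]
    _ ≤ a ^ (-ε⁻¹) := rpow_le_rpow_of_exponent_le ha hexp

theorem expectedWitnesses_le_min {d ε δ : ℝ} (hd : 1 ≤ 4 * d) {n : ℕ} (hn : 0 < n)
    (hε : 0 < ε) (hδ : 0 ≤ δ) (u : ℕ) :
    expectedWitnesses n (d / n) ((4 * d) ^ (-((1 + δ) * (1 + ε) / ε)) * n) ε u ≤
      min ((exp 1 ^ 2 / 8) ^ u) (exp 1 * u * (d / n) / 2 * (exp 1 ^ 2 * d / 2) ^ u) := by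
  have hn' : (0 : ℝ) < n := by exact_mod_cast hn
  have hd₀ : 0 < d := by linarith
  rw [expectedWitnesses]
  split_ifs with hu
  swap
  · exact le_min (by positivity) (by positivity)
  set m := violatingEdgeCount ε u
  set c := exp 1 * u * (d / n) / 2 with hc
  have hc₀ : 0 ≤ c := by positivity
  have hcε : c ≤ (4 * d) ^ (-ε⁻¹) := calc
    c = exp 1 / 8 * (4 * d * (u / n)) := by rw [hc]; ring
    _ ≤ 4 * d * (u / n) := by
        refine mul_le_of_le_one_left (by positivity) ?_
        linarith [exp_one_lt_d9]
    _ ≤ (4 * d) ^ (-ε⁻¹) := mul_le_rpow_neg_inv hd hε hδ (by rwa [div_le_iff₀ hn'])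
  have hc₁ : c ≤ 1 :=
    hcε.trans (rpow_le_one_of_one_le_of_nonpos hd (neg_nonpos.2 (inv_pos.2 hε).le))
  have hm : (1 + ε) * u < m := lt_violatingEdgeCount (by linarith) u
  have hum : u + 1 ≤ m := by
    have : (u : ℝ) < m := by nlinarith [u.cast_nonneg (α := ℝ)]
    exact_mod_cast this
  have hterm : (n.choose u : ℝ) * (u.choose 2).choose m * (d / n) ^ m ≤
      (exp 1 ^ 2 * d / 2) ^ u * c ^ (m - u) := by
    have := choose_mul_choose_mul_pow_le n u m (by positivity : 0 ≤ d / n) (by omega)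
    rwa [show exp 1 ^ 2 * n * (d / n) / 2 = exp 1 ^ 2 * d / 2 by field_simp] at this
  refine hterm.trans (le_min ?_ ?_)
  · have hεu : ε * u ≤ (m - u : ℕ) := by
      rw [Nat.cast_sub (by omega)]
      linarith
    have hcε' : c ^ ε ≤ (4 * d)⁻¹ := calc
      c ^ ε ≤ ((4 * d) ^ (-ε⁻¹)) ^ ε := rpow_le_rpow hc₀ hcε hε.le
      _ = (4 * d)⁻¹ := by
          rw [← rpow_mul (by linarith), neg_mul, inv_mul_cancel₀ hε.ne', rpow_neg_one]
    calc (exp 1 ^ 2 * d / 2) ^ u * c ^ (m - u)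
        ≤ (exp 1 ^ 2 * d / 2) ^ u * (c ^ ε) ^ u := by
          gcongr
          rw [← rpow_natCast, ← rpow_natCast, ← rpow_mul hc₀]
          exact rpow_le_rpow_of_exponent_ge' hc₀ hc₁ (by positivity) hεu
      _ ≤ (exp 1 ^ 2 * d / 2) ^ u * ((4 * d)⁻¹) ^ u := by gcongr
      _ = (exp 1 ^ 2 / 8) ^ u := by
          rw [← mul_pow]
          congr 1
          field_simp
          norm_num
  · calc (exp 1 ^ 2 * d / 2) ^ u * c ^ (m - u) ≤ (exp 1 ^ 2 * d / 2) ^ u * c := by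
          gcongr
          exact pow_le_of_le_one hc₀ hc₁ (by omega)
      _ = c * (exp 1 ^ 2 * d / 2) ^ u := mul_comm _ _

theorem expectedWitnesses_nonneg (n : ℕ) {p : ℝ} (hp : 0 ≤ p) (ℓ ε : ℝ) (u : ℕ) :
    0 ≤ expectedWitnesses n p ℓ ε u := by
  rw [expectedWitnesses]
  split_ifs <;> positivity

theorem tendsto_tsum_expectedWitnesses_zero {d : ℝ} (hd : 1 ≤ 4 * d) {ε δ : ℕ → ℝ}
    (hε : ∀ n, 0 < ε n) (hδ : ∀ n, 0 ≤ δ n) :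
    Tendsto (fun n : ℕ => ∑' u, expectedWitnesses n (d / n)
      ((4 * d) ^ (-((1 + δ n) * (1 + ε n) / ε n)) * n) (ε n) u) atTop (𝓝 0) := by
  have hp : ∀ n : ℕ, 0 ≤ d / n := fun n => div_nonneg (by linarith) n.cast_nonneg
  have hsummable : Summable fun u : ℕ => (exp 1 ^ 2 / 8) ^ u :=
    summable_geometric_of_lt_one (by positivity) (by nlinarith [exp_one_lt_d9, exp_pos 1])
  have hpointwise (u : ℕ) : Tendsto (fun n : ℕ => expectedWitnesses n (d / n)
      ((4 * d) ^ (-((1 + δ n) * (1 + ε n) / ε n)) * n) (ε n) u) atTop (𝓝 0) := by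
    refine squeeze_zero' (g := fun n : ℕ => exp 1 * u * (d / n) / 2 * (exp 1 ^ 2 * d / 2) ^ u)
      (.of_forall fun n => expectedWitnesses_nonneg n (hp n) _ _ u) ?_
      ((tendsto_const_div_atTop_nhds_zero_nat (exp 1 * u * d / 2 * (exp 1 ^ 2 * d / 2) ^ u)).congr
        fun n => by ring)
    filter_upwards [eventually_gt_atTop 0] with n hn
    exact (expectedWitnesses_le_min hd hn (hε n) (hδ n) u).trans (min_le_right _ _)
  simpa using tendsto_tsum_of_dominated_convergence hsummable hpointwise <| by
    filter_upwards [eventually_gt_atTop 0] with n hn u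
    rw [Real.norm_of_nonneg (expectedWitnesses_nonneg n (hp n) _ _ u)]
    exact (expectedWitnesses_le_min hd hn (hε n) (hδ n) u).trans (min_le_left _ _)

theorem stmt_19_general (d : ℕ) (hd : 0 < d) (ε δ : ℕ → ℝ)
    (hε : ∀ n, 0 < ε n) (hδ : ∀ n, 0 < δ n) :
    Filter.Tendsto
      (fun n => erProb n ((d : ℝ) / n) fun G =>
        SparseR G
          ((4 * (d : ℝ)) ^ (-((1 + δ n) * (1 + ε n) / ε n)) * n)
          (ε n))
      Filter.atTop (nhds 1) := by
  have hd' : (1 : ℝ) ≤ 4 * d := by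
    have : (1 : ℝ) ≤ d := by exact_mod_cast hd
    linarith
  have hnot : Tendsto (fun n => erProb n ((d : ℝ) / n) fun G =>
      ¬ SparseR G ((4 * (d : ℝ)) ^ (-((1 + δ n) * (1 + ε n) / ε n)) * n) (ε n)) atTop (𝓝 0) := by
    refine squeeze_zero' ?_ ?_ (tendsto_tsum_expectedWitnesses_zero hd' hε fun n => (hδ n).le)
    all_goals
      filter_upwards [eventually_ge_atTop d] with n hn
      have hp₁ : (d : ℝ) / n ≤ 1 := div_le_one_of_le₀ (by exact_mod_cast hn) n.cast_nonneg
    · exact erProb_nonneg n (by positivity) hp₁ _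
    · exact erProb_not_sparseR_le n (by positivity) hp₁ (by linarith [hε n])
  simpa [erProb_not] using hnot.const_sub 1

/-- sparsity lemma for Erdős–Rényi random graphs: for fixed `d ≥ 1` and
positive sequences `ε_n`, `δ_n` with `ε_n·δ_n·log n → ∞`, the probability that
`G ∼ G(n, d/n)` is `((4d)^{-(1+δ_n)(1+ε_n)/ε_n}·n, ε_n)`-sparse tends to `1`. -/
theorem stmt_19 (d : ℕ) (hd : 0 < d) (ε δ : ℕ → ℝ)
    (hε : ∀ n, 0 < ε n) (hδ : ∀ n, 0 < δ n)
    (hlim : Filter.Tendsto (fun n => ε n * δ n * Real.log n)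
      Filter.atTop Filter.atTop) :
    Filter.Tendsto
      (fun n => erProb n ((d : ℝ) / n) fun G =>
        SparseR G
          ((4 * (d : ℝ)) ^ (-((1 + δ n) * (1 + ε n) / ε n)) * n)
          (ε n))
      Filter.atTop (nhds 1) :=
  stmt_19_general d hd ε δ hε hδ
end
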